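/- arXiv:1802.09686 — 3 statements merged into one kernel-verified Lean document; each statement's English description precedes it below -/
import Mathlib

section
/- For any composition α = (α₁,…,α_k) of n, the generalized Schur function s_{α̃}(X) in n variables equals (1/Δ(X)) · 𝒜ₙ(F_α(X) · x^{δₙ}), where α̃ is α padded with n-k zeros. Equivalently, 𝒜ₙ(F_α(X) x^{δₙ}) = Δ_{α̃}(X). -/
open MvPolynomial Finset
open scoped Classical

/-- The determinant Δ_γ(X) = det ‖x_i^{γ_j + n - 1 - j}‖ (0-based indexing). -/
noncomputable def DeltaG (n : ℕ) (γ : Fin n → ℕ) : MvPolynomial (Fin n) ℚ :=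
  Matrix.det (Matrix.of fun i j : Fin n =>
    (X i : MvPolynomial (Fin n) ℚ) ^ (γ j + (n - 1 - (j : ℕ))))

/-- The Vandermonde determinant Δ(X) = det ‖x_i^{n-1-j}‖. -/
noncomputable def Vand (n : ℕ) : MvPolynomial (Fin n) ℚ := DeltaG n 0

/-- The antisymmetrization operator 𝒜ₙ = ∑_{σ ∈ Sₙ} sgn(σ) σ. -/
noncomputable def Asym (n : ℕ) (f : MvPolynomial (Fin n) ℚ) : MvPolynomial (Fin n) ℚ :=
  ∑ σ : Equiv.Perm (Fin n), (Equiv.Perm.sign σ : ℤ) • rename σ f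

/-- The staircase monomial x^{δₙ} = ∏ x_i^{n-1-i} (0-based). -/
noncomputable def xdelta (n : ℕ) : MvPolynomial (Fin n) ℚ :=
  ∏ i : Fin n, X i ^ (n - 1 - (i : ℕ))

/-- The monomial x^γ = ∏ x_i^{γ_i}. -/
noncomputable def xgam (n : ℕ) (γ : Fin n → ℕ) : MvPolynomial (Fin n) ℚ :=
  ∏ i : Fin n, X i ^ γ i

/-- The fraction field of the polynomial ring, where Schur functions s_γ = Δ_γ/Δ live. -/
abbrev K (n : ℕ) := FractionRing (MvPolynomial (Fin n) ℚ)

noncomputable def toK (n : ℕ) (p : MvPolynomial (Fin n) ℚ) : K n := algebraMap _ _ p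

/-- The (generalized, weak-composition-indexed) Schur function s_γ(X) = Δ_γ(X)/Δ(X). -/
noncomputable def schurG (n : ℕ) (γ : Fin n → ℕ) : K n := toK n (DeltaG n γ) / toK n (Vand n)

/-- `α` is a composition of `m`: positive parts summing to `m`. -/
def IsComposition (m : ℕ) (α : List ℕ) : Prop := α.sum = m ∧ ∀ x ∈ α, 0 < x

/-- Set(α) = {α₁, α₁+α₂, …, α₁+⋯+α_{k-1}}, the proper partial sums of α. -/
def compSet (α : List ℕ) : Set ℕ :=
  {m | ∃ j, 0 < j ∧ j < α.length ∧ (α.take j).sum = m}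

/-- The condition on a weakly increasing sequence `a : Fin m → Fin n` indexing a monomial
of the Gessel fundamental F_α: monotone, with strict increase a_i < a_{i+1} whenever the
(1-based) position i+1 of a_i lies in Set(α). -/
def FCond (n m : ℕ) (α : List ℕ) (a : Fin m → Fin n) : Prop :=
  Monotone a ∧ ∀ i j : Fin m, (j : ℕ) = (i : ℕ) + 1 → ((i : ℕ) + 1) ∈ compSet α → a i < a j

/-- The Gessel fundamental quasisymmetric polynomial F_α(x₁,…,xₙ) of degree `m`. -/
noncomputable def Fqs (n m : ℕ) (α : List ℕ) : MvPolynomial (Fin n) ℚ :=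
  ∑ a : Fin m → Fin n, if FCond n m α a then ∏ i, X (a i) else 0

/-- α padded with zeros to a weak composition of length n. -/
def pad (n : ℕ) (α : List ℕ) : Fin n → ℕ := fun j => α.getD (j : ℕ) 0


namespace AF


def psum (m : ℕ → ℕ) (J : ℕ) : ℕ := ∑ i ∈ Finset.range J, m i
def atil (α : List ℕ) : ℕ → ℕ := fun i => α.getD i 0

lemma psum_succ (m : ℕ → ℕ) (J : ℕ) : psum m (J+1) = psum m J + m J :=
  Finset.sum_range_succ m J

lemma psum_mono (m : ℕ → ℕ) : Monotone (psum m) := by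
  intro a b h
  exact Finset.sum_le_sum_of_subset (Finset.range_subset_range.2 h)

lemma atil_zero (α : List ℕ) (i : ℕ) (h : α.length ≤ i) : atil α i = 0 :=
  List.getD_eq_default _ _ h

lemma atil_lt (α : List ℕ) (i : ℕ) (h : i < α.length) : atil α i = α[i] :=
  List.getD_eq_getElem _ _ h

lemma length_le_sum (α : List ℕ) (hpos : ∀ x ∈ α, 0 < x) : α.length ≤ α.sum := by
  induction α with
  | nil => simp
  | cons x l ih =>
    simp only [List.length_cons, List.sum_cons]
    have hx := hpos x (by simp)
    have := ih (fun y hy => hpos y (by simp [hy]))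
    omega

lemma psum_atil (α : List ℕ) (J : ℕ) : psum (atil α) J = (α.take J).sum := by
  induction J with
  | zero => simp [psum]
  | succ J ih =>
    rw [psum_succ, ih]
    by_cases h : J < α.length
    · rw [List.sum_take_succ _ _ h, atil_lt _ _ h]
    · push_neg at h
      rw [atil_zero _ _ h, List.take_of_length_le h, List.take_of_length_le (by omega)]
      simp

lemma psum_atil_strict (α : List ℕ) (hpos : ∀ x ∈ α, 0 < x) (t : ℕ) (ht : t < α.length) :
    psum (atil α) t < psum (atil α) (t+1) := by
  rw [psum_succ, atil_lt _ _ ht]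
  have := hpos _ (α.getElem_mem ht)
  omega

lemma mem_compSet_iff (α : List ℕ) (s : ℕ) :
    s ∈ compSet α ↔ ∃ j, 0 < j ∧ j < α.length ∧ psum (atil α) j = s := by
  simp only [compSet, Set.mem_setOf_eq, psum_atil]

lemma compSet_pos (α : List ℕ) (hpos : ∀ x ∈ α, 0 < x) {s : ℕ} (hs : s ∈ compSet α) :
    0 < s := by
  rw [mem_compSet_iff] at hs
  obtain ⟨j, hj0, hjl, hjs⟩ := hs
  have h0 : psum (atil α) 0 = 0 := by simp [psum]
  have := psum_atil_strict α hpos 0 (by omega)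
  have h2 : psum (atil α) (0+1) ≤ psum (atil α) j := psum_mono _ (by omega)
  omega

lemma compSet_lt (α : List ℕ) (hpos : ∀ x ∈ α, 0 < x) {s : ℕ} (hs : s ∈ compSet α) :
    s < α.sum := by
  rw [mem_compSet_iff] at hs
  obtain ⟨j, hj0, hjl, hjs⟩ := hs
  have h1 : psum (atil α) j < psum (atil α) (j+1) := psum_atil_strict α hpos j hjl
  have h2 : psum (atil α) (j+1) ≤ psum (atil α) α.length := psum_mono _ (by omega)
  have h3 : psum (atil α) α.length = α.sum := by
    rw [psum_atil, List.take_of_length_le (le_refl _)]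
  omega

def InM (n : ℕ) (α : List ℕ) (m : ℕ → ℕ) : Prop :=
  (∀ i, n ≤ i → m i = 0) ∧ psum m n = n ∧ ∀ s ∈ compSet α, ∃ J, psum m J = s

lemma InM_atil (n : ℕ) (α : List ℕ) (hsum : α.sum = n) (hpos : ∀ x ∈ α, 0 < x) :
    InM n α (atil α) := by
  have hlen : α.length ≤ n := hsum ▸ length_le_sum α hpos
  refine ⟨fun i hi => atil_zero _ _ (by omega), ?_, ?_⟩
  · rw [psum_atil, List.take_of_length_le hlen, hsum]
  · intro s hs
    rw [mem_compSet_iff] at hs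
    obtain ⟨j, _, _, hjs⟩ := hs
    exact ⟨j, hjs⟩





def swapm (m : ℕ → ℕ) (j : ℕ) : ℕ → ℕ :=
  fun i => if i = j then m (j+1) - 1 else if i = j + 1 then m j + 1 else m i

lemma swapm_at (m : ℕ → ℕ) (j : ℕ) : swapm m j j = m (j+1) - 1 := by simp [swapm]

lemma swapm_at1 (m : ℕ → ℕ) (j : ℕ) : swapm m j (j+1) = m j + 1 := by simp [swapm]

lemma swapm_other (m : ℕ → ℕ) (j i : ℕ) (h1 : i ≠ j) (h2 : i ≠ j + 1) :
    swapm m j i = m i := by simp [swapm, h1, h2]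

lemma swapm_swapm (m : ℕ → ℕ) (j : ℕ) (h1 : 1 ≤ m (j+1)) :
    swapm (swapm m j) j = m := by
  funext i
  by_cases hi : i = j
  · subst hi; rw [swapm_at, swapm_at1]; omega
  by_cases hi2 : i = j + 1
  · subst hi2; rw [swapm_at1, swapm_at]; omega
  · rw [swapm_other _ _ _ hi hi2, swapm_other _ _ _ hi hi2]

lemma psum_swapm (m : ℕ → ℕ) (j : ℕ) (h1 : 1 ≤ m (j+1)) (J : ℕ) :
    psum (swapm m j) J = if J = j + 1 then psum m j + (m (j+1) - 1) else psum m J := by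
  induction J with
  | zero => simp [psum]
  | succ J ih =>
    rw [psum_succ, psum_succ, ih]
    by_cases hJ : J = j
    · rw [if_neg (by omega : J ≠ j + 1), if_pos (by omega : J + 1 = j + 1), hJ, swapm_at]
    by_cases hJ2 : J = j + 1
    · rw [if_pos hJ2, if_neg (by omega : J + 1 ≠ j + 1), hJ2, swapm_at1, psum_succ m j]
      omega
    · rw [if_neg hJ2, if_neg (by omega : J + 1 ≠ j + 1), swapm_other _ _ _ hJ hJ2]

def SafeP (n : ℕ) (α : List ℕ) (m : ℕ → ℕ) (j : ℕ) : Prop :=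
  j + 1 < n ∧ 1 ≤ m (j+1) ∧ InM n α (swapm m j)

noncomputable def jstar (n : ℕ) (α : List ℕ) (m : ℕ → ℕ) : ℕ := sSup {j | SafeP n α m j}

def Einj (n : ℕ) (m : ℕ → ℕ) : Prop :=
  Function.Injective (fun i : Fin n => m i + (n - 1 - (i : ℕ)))



lemma swapm_eq_self (m : ℕ → ℕ) (j : ℕ) (h : m (j+1) = m j + 1) : swapm m j = m := by
  funext i
  by_cases hi : i = j
  · subst hi; rw [swapm_at]; omega
  by_cases hi2 : i = j + 1
  · subst hi2; rw [swapm_at1]; omega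
  · rw [swapm_other _ _ _ hi hi2]

lemma InM_swapm_iff {n : ℕ} {α : List ℕ} {m : ℕ → ℕ} {j : ℕ}
    (hm : InM n α m) (hj : j + 1 < n) (h1 : 1 ≤ m (j+1)) :
    InM n α (swapm m j) ↔
      (psum m (j+1) ∉ compSet α ∨ m j = 0 ∨ m (j+1) = m j + 1) := by
  obtain ⟨hsupp, htot, hcov⟩ := hm
  constructor
  · intro hsw
    by_contra hcon
    push_neg at hcon
    obtain ⟨hS, hmj, hne⟩ := hcon
    obtain ⟨J, hJ⟩ := hsw.2.2 _ hS
    rw [psum_swapm m j h1 J] at hJ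
    by_cases hJ1 : J = j + 1
    · rw [if_pos hJ1, psum_succ] at hJ
      omega
    · rw [if_neg hJ1] at hJ
      rcases lt_or_ge J (j+1) with hlt | hge
      · have h2 : psum m J ≤ psum m j := psum_mono m (by omega)
        have h3 : psum m (j+1) = psum m j + m j := psum_succ m j
        omega
      · have hge2 : j + 2 ≤ J := by omega
        have h2 : psum m (j+2) ≤ psum m J := psum_mono m hge2
        have h3 : psum m (j+2) = psum m (j+1) + m (j+1) := psum_succ m (j+1)
        omega
  · intro h
    refine ⟨fun i hi => ?_, ?_, ?_⟩
    · rw [swapm_other _ _ _ (by omega) (by omega)]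
      exact hsupp i hi
    · rw [psum_swapm m j h1, if_neg (by omega : n ≠ j + 1)]
      exact htot
    · intro s hs
      rcases h with hS | hmj | heq
      · obtain ⟨J, hJ⟩ := hcov s hs
        refine ⟨J, ?_⟩
        rw [psum_swapm m j h1, if_neg ?_]
        · exact hJ
        · rintro rfl
          exact hS (hJ ▸ hs)
      · obtain ⟨J, hJ⟩ := hcov s hs
        by_cases hJ1 : J = j + 1
        · refine ⟨j, ?_⟩
          rw [psum_swapm m j h1, if_neg (by omega : j ≠ j + 1)]
          subst hJ1
          rw [psum_succ] at hJ
          omega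
        · exact ⟨J, by rw [psum_swapm m j h1, if_neg hJ1]; exact hJ⟩
      · rw [swapm_eq_self m j heq]
        exact hcov s hs

lemma lt_of_steps {f : ℕ → ℕ} (r : ℕ) (h : ∀ i, i < r → f i < f (i+1)) :
    ∀ t t', t < t' → t' ≤ r → f t < f t' := by
  intro t t' h1 h2
  induction t' with
  | zero => omega
  | succ s ih =>
    rcases Nat.lt_or_ge t s with hts | hts
    · exact lt_trans (ih hts (by omega)) (h s (by omega))
    · have : t = s := by omega
      subst this
      exact h t (by omega)

lemma psum_congr_zero {m : ℕ → ℕ} {a b : ℕ} (hab : a ≤ b) (h0 : ∀ i, a ≤ i → m i = 0) :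
    psum m b = psum m a := by
  induction b with
  | zero =>
    have : a = 0 := by omega
    subst this; rfl
  | succ b ih =>
    by_cases hb : a = b + 1
    · subst hb; rfl
    · rw [psum_succ, h0 b (by omega), ih (by omega)]
      omega

lemma sum_zero_of_pos (α : List ℕ) (hpos : ∀ x ∈ α, 0 < x) (h : α.sum = 0) : α = [] := by
  cases α with
  | nil => rfl
  | cons x l =>
    have := hpos x (by simp)
    simp only [List.sum_cons] at h
    omega

lemma eq_atil_of_no_safe {n : ℕ} {α : List ℕ} {m : ℕ → ℕ}
    (hsum : α.sum = n) (hpos : ∀ x ∈ α, 0 < x)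
    (hm : InM n α m) (H : ∀ j, ¬ SafeP n α m j) : m = atil α := by
  classical
  obtain ⟨hsupp, htot, hcov⟩ := hm
  -- key consequence of no-safe
  have key : ∀ j, j + 1 < n → 1 ≤ m (j+1) →
      psum m (j+1) ∈ compSet α ∧ m j ≠ 0 := by
    intro j hj h1
    by_contra hcon
    apply H j
    refine ⟨hj, h1, ?_⟩
    rw [InM_swapm_iff ⟨hsupp, htot, hcov⟩ hj h1]
    push_neg at hcon
    by_cases hin : psum m (j+1) ∈ compSet α
    · exact Or.inr (Or.inl (by simpa using hcon hin))
    · exact Or.inl hin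
  rcases Nat.eq_zero_or_pos n with hn0 | hn
  · subst hn0
    have hα : α = [] := sum_zero_of_pos α hpos hsum
    subst hα
    funext i
    exact hsupp i (by omega)
  -- T nonempty
  set T : Set ℕ := {i | i < n ∧ 1 ≤ m i} with hT
  have hTne : T.Nonempty := by
    by_contra hc
    rw [Set.not_nonempty_iff_eq_empty] at hc
    have : psum m n = 0 := by
      have : ∀ i, 0 ≤ i → m i = 0 := by
        intro i _
        rcases Nat.lt_or_ge i n with h | h
        · by_contra hmi
          have hiT : i ∈ T := ⟨h, by omega⟩
          rw [hc] at hiT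
          exact hiT
        · exact hsupp i h
      calc psum m n = psum m 0 := psum_congr_zero (by omega) this
        _ = 0 := rfl
    omega
  have hTbdd : BddAbove T := ⟨n, fun x hx => le_of_lt hx.1⟩
  set J0 : ℕ := sSup T with hJ0
  have hJ0T : J0 ∈ T := Nat.sSup_mem hTne hTbdd
  have hJ0lt : J0 < n := hJ0T.1
  have hle : ∀ i ∈ T, i ≤ J0 := fun i hi => le_csSup hTbdd hi
  have hzero : ∀ i, J0 < i → m i = 0 := by
    intro i hi
    rcases Nat.lt_or_ge i n with h | h
    · by_contra hmi
      have : i ∈ T := ⟨h, by omega⟩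
      exact absurd (hle i this) (by omega)
    · exact hsupp i h
  have step : ∀ i, 1 ≤ i → i ≤ J0 → 1 ≤ m i →
      1 ≤ m (i-1) ∧ psum m i ∈ compSet α := by
    intro i h1 h2 hmi
    have hk := key (i-1) (by omega) (by rwa [show i - 1 + 1 = i by omega])
    rw [show i - 1 + 1 = i by omega] at hk
    exact ⟨by omega, hk.1⟩
  have below : ∀ d, d ≤ J0 → 1 ≤ m (J0 - d) := by
    intro d
    induction d with
    | zero => intro _; exact hJ0T.2
    | succ d ih =>
      intro hd
      have h' := ih (by omega)
      have hs := step (J0 - d) (by omega) (by omega) h'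
      have : J0 - d - 1 = J0 - (d+1) := by omega
      rw [this] at hs
      exact hs.1
  have mpos : ∀ i, i ≤ J0 → 1 ≤ m i := by
    intro i hi
    have := below (J0 - i) (by omega)
    rwa [show J0 - (J0 - i) = i by omega] at this
  have inS : ∀ i, 1 ≤ i → i ≤ J0 → psum m i ∈ compSet α := by
    intro i h1 h2
    exact (step i h1 h2 (mpos i h2)).2
  have ptop : psum m (J0 + 1) = n := by
    rw [← htot]
    exact (psum_congr_zero (by omega) (fun i hi => hzero i (by omega))).symm
  have psteps : ∀ i, i < J0 + 1 → psum m i < psum m (i+1) := by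
    intro i hi
    rw [psum_succ]
    have := mpos i (by omega)
    omega
  -- the take-sums side
  set k : ℕ := α.length with hk
  set ts : ℕ → ℕ := psum (atil α) with hts
  have tssteps : ∀ t, t < k → ts t < ts (t+1) := fun t ht => psum_atil_strict α hpos t ht
  have tstop : ts k = n := by
    rw [hts, psum_atil, List.take_of_length_le (le_refl _), hsum]
  set Tfin : Finset ℕ := Finset.image ts (Finset.range (k+1)) with hTfin
  have hcardT : Tfin.card = k + 1 := by
    rw [hTfin, Finset.card_image_of_injOn, Finset.card_range]
    intro a ha b hb hab
    simp only [Finset.coe_range, Set.mem_Iio] at ha hb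
    by_contra hne
    rcases Nat.lt_or_ge a b with h | h
    · exact absurd hab (Nat.ne_of_lt (lt_of_steps k tssteps a b h (by omega)))
    · exact absurd hab.symm (Nat.ne_of_lt (lt_of_steps k tssteps b a (by omega) (by omega)))
  -- psum image equals Tfin
  have covbound : ∀ s ∈ compSet α, ∃ J, J ≤ J0 ∧ 1 ≤ J ∧ psum m J = s := by
    intro s hs
    obtain ⟨J, hJ⟩ := hcov s hs
    have hspos := compSet_pos α hpos hs
    have hslt : s < n := hsum ▸ compSet_lt α hpos hs
    refine ⟨J, ?_, ?_, hJ⟩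
    · by_contra hc
      push_neg at hc
      have : psum m J = psum m (J0+1) := psum_congr_zero (by omega) (fun i hi => hzero i (by omega))
      rw [this, ptop] at hJ
      omega
    · by_contra hc
      push_neg at hc
      interval_cases J
      simp [psum] at hJ
      omega
  have himg : Finset.image (fun i => psum m i) (Finset.range (J0+2)) = Tfin := by
    rw [hTfin]
    apply Finset.Subset.antisymm
    · intro x hx
      rw [Finset.mem_image] at hx
      obtain ⟨i, hi, rfl⟩ := hx
      rw [Finset.mem_range] at hi
      rcases Nat.eq_zero_or_pos i with h0 | h0
      · subst h0
        exact Finset.mem_image.2 ⟨0, Finset.mem_range.2 (by omega), rfl⟩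
      rcases Nat.lt_or_ge i (J0+1) with hlt | hge
      · have := inS i (by omega) (by omega)
        rw [mem_compSet_iff] at this
        obtain ⟨j, hj0, hjl, hjs⟩ := this
        exact Finset.mem_image.2 ⟨j, Finset.mem_range.2 (by omega), hjs⟩
      · have : i = J0 + 1 := by omega
        subst this
        exact Finset.mem_image.2 ⟨k, Finset.mem_range.2 (by omega), by rw [tstop, ptop]⟩
    · intro x hx
      rw [Finset.mem_image] at hx
      obtain ⟨t, ht, rfl⟩ := hx
      rw [Finset.mem_range] at ht
      rcases Nat.eq_zero_or_pos t with h0 | h0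
      · subst h0
        exact Finset.mem_image.2 ⟨0, Finset.mem_range.2 (by omega), rfl⟩
      rcases Nat.lt_or_ge t k with hlt | hge
      · have htS : ts t ∈ compSet α := by
          rw [mem_compSet_iff]
          exact ⟨t, h0, hlt, rfl⟩
        obtain ⟨J, hJ1, hJ2, hJ3⟩ := covbound _ htS
        exact Finset.mem_image.2 ⟨J, Finset.mem_range.2 (by omega), hJ3⟩
      · have : t = k := by omega
        subst this
        exact Finset.mem_image.2 ⟨J0+1, Finset.mem_range.2 (by omega), by rw [ptop, tstop]⟩
  have hcardP : (Finset.image (fun i => psum m i) (Finset.range (J0+2))).card = J0 + 2 := by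
    rw [Finset.card_image_of_injOn, Finset.card_range]
    intro a ha b hb hab
    simp only [Finset.coe_range, Set.mem_Iio] at ha hb
    by_contra hne
    rcases Nat.lt_or_ge a b with h | h
    · exact absurd hab (Nat.ne_of_lt (lt_of_steps (J0+1) psteps a b h (by omega)))
    · exact absurd hab.symm (Nat.ne_of_lt (lt_of_steps (J0+1) psteps b a (by omega) (by omega)))
  have hkJ : k = J0 + 1 := by
    have := himg ▸ hcardP
    omega
  -- both enumerations are the order embedding of Tfin
  have hf1 : (fun t : Fin (k+1) => ts ↑t) = Tfin.orderEmbOfFin hcardT := by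
    apply Finset.orderEmbOfFin_unique hcardT
    · intro x
      rw [hTfin]
      exact Finset.mem_image.2 ⟨↑x, Finset.mem_range.2 x.isLt, rfl⟩
    · intro a b hab
      exact lt_of_steps k tssteps ↑a ↑b hab (by omega)
  have hf2 : (fun t : Fin (k+1) => psum m ↑t) = Tfin.orderEmbOfFin hcardT := by
    apply Finset.orderEmbOfFin_unique hcardT
    · intro x
      rw [← himg]
      exact Finset.mem_image.2 ⟨↑x, Finset.mem_range.2 (by omega), rfl⟩
    · intro a b hab
      exact lt_of_steps (J0+1) psteps ↑a ↑b hab (by omega)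
  have hpts : ∀ t, t ≤ k → psum m t = ts t := by
    intro t ht
    have := congrFun (hf2.trans hf1.symm) ⟨t, by omega⟩
    simpa using this
  funext i
  rcases Nat.lt_or_ge i k with hik | hik
  · have e1 : psum m (i+1) = psum m i + m i := psum_succ m i
    have e2 : ts (i+1) = ts i + atil α i := psum_succ (atil α) i
    have e3 : psum m i = ts i := hpts i (by omega)
    have e4 : psum m (i+1) = ts (i+1) := hpts (i+1) (by omega)
    omega
  · rw [atil_zero α i hik]
    exact hzero i (by omega)



lemma einj_adj {n : ℕ} {m : ℕ → ℕ} (hE : Einj n m) {j d : ℕ} (hj : j + d < n) (hd : 0 < d)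
    (h : m (j + d) = m j + d) : False := by
  have h2 : (⟨j, by omega⟩ : Fin n) = ⟨j + d, by omega⟩ := by
    apply hE
    show m j + (n - 1 - j) = m (j + d) + (n - 1 - (j + d))
    omega
  have := Fin.mk.injEq j (by omega : j < n) (j+d) (by omega)
  rw [this] at h2
  omega

lemma exists_safe {n : ℕ} {α : List ℕ} {m : ℕ → ℕ}
    (hsum : α.sum = n) (hpos : ∀ x ∈ α, 0 < x)
    (hm : InM n α m) (hne : m ≠ atil α) : ∃ j, SafeP n α m j := by
  by_contra hc
  push_neg at hc
  exact hne (eq_atil_of_no_safe hsum hpos hm hc)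

lemma safe_atil {n : ℕ} {α : List ℕ} (hsum : α.sum = n) (hpos : ∀ x ∈ α, 0 < x)
    {j : ℕ} (hs : SafeP n α (atil α) j) : swapm (atil α) j = atil α := by
  obtain ⟨hjn, h1, hM⟩ := hs
  have hjk : j + 1 < α.length := by
    by_contra hc
    push_neg at hc
    rw [atil_zero α _ hc] at h1
    omega
  have hch := (InM_swapm_iff (InM_atil n α hsum hpos) hjn h1).1 hM
  rcases hch with h | h | h
  · exact absurd ((mem_compSet_iff α _).2 ⟨j+1, by omega, hjk, rfl⟩) h
  · rw [atil_lt α j (by omega)] at h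
    have := hpos _ (α.getElem_mem (by omega : j < α.length))
    omega
  · exact swapm_eq_self _ _ h

lemma no_safe_above {n : ℕ} {α : List ℕ} {m : ℕ → ℕ} {j0 : ℕ}
    (hm : InM n α m) (hE : Einj n m)
    (hs : SafeP n α m j0) (habove : ∀ j, j0 < j → ¬ SafeP n α m j) :
    ∀ j, j0 < j → ¬ SafeP n α (swapm m j0) j := by
  obtain ⟨hj0, h1, hMs⟩ := hs
  intro j hgt hSP
  obtain ⟨hjn, hj1, hMs'⟩ := hSP
  apply habove j hgt
  rcases Nat.lt_or_ge (j0+1) j with hfar | hnear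
  · have e1 : swapm m j0 j = m j := swapm_other _ _ _ (by omega) (by omega)
    have e2 : swapm m j0 (j+1) = m (j+1) := swapm_other _ _ _ (by omega) (by omega)
    have hp : psum (swapm m j0) (j+1) = psum m (j+1) := by
      rw [psum_swapm m j0 h1, if_neg (by omega)]
    have hj1m : 1 ≤ m (j+1) := e2 ▸ hj1
    refine ⟨hjn, hj1m, ?_⟩
    rw [InM_swapm_iff hm hjn hj1m]
    have hch := (InM_swapm_iff hMs hjn hj1).1 hMs'
    rw [e1, e2, hp] at hch
    exact hch
  · have hj : j = j0 + 1 := by omega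
    subst hj
    have e2 : swapm m j0 (j0+1+1) = m (j0+1+1) := swapm_other _ _ _ (by omega) (by omega)
    have e1 : swapm m j0 (j0+1) = m j0 + 1 := swapm_at1 _ _
    have hp : psum (swapm m j0) (j0+1+1) = psum m (j0+1+1) := by
      rw [psum_swapm m j0 h1, if_neg (by omega)]
    have hj1m : 1 ≤ m (j0+1+1) := e2 ▸ hj1
    refine ⟨hjn, hj1m, ?_⟩
    rw [InM_swapm_iff hm hjn hj1m]
    have hch := (InM_swapm_iff hMs hjn hj1).1 hMs'
    rw [e1, e2, hp] at hch
    rcases hch with h | h | h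
    · exact Or.inl h
    · omega
    · exfalso
      apply einj_adj hE (j := j0) (d := 2) (by omega) (by omega)
      have e3 : j0 + 1 + 1 = j0 + 2 := by omega
      rw [e3] at h
      omega

lemma e_swapm {n : ℕ} {m : ℕ → ℕ} {j : ℕ} (hj : j + 1 < n) (h1 : 1 ≤ m (j+1)) :
    (fun i : Fin n => swapm m j i + (n - 1 - (i:ℕ)))
      = (fun i : Fin n => m i + (n - 1 - (i:ℕ)))
          ∘ (Equiv.swap (⟨j, by omega⟩ : Fin n) ⟨j+1, hj⟩) := by
  funext i
  by_cases hij : i = (⟨j, by omega⟩ : Fin n)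
  · subst hij
    rw [Function.comp_apply, Equiv.swap_apply_left]
    show swapm m j j + (n - 1 - j) = m (j+1) + (n - 1 - (j+1))
    rw [swapm_at]
    omega
  by_cases hij1 : i = (⟨j+1, hj⟩ : Fin n)
  · subst hij1
    rw [Function.comp_apply, Equiv.swap_apply_right]
    show swapm m j (j+1) + (n - 1 - (j+1)) = m j + (n - 1 - j)
    rw [swapm_at1]
    omega
  · rw [Function.comp_apply, Equiv.swap_apply_of_ne_of_ne hij hij1]
    show swapm m j ↑i + _ = _
    rw [swapm_other _ _ _ (fun hc => hij (Fin.ext hc)) (fun hc => hij1 (Fin.ext hc))]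

lemma Einj_swapm {n : ℕ} {m : ℕ → ℕ} {j : ℕ} (hj : j + 1 < n) (h1 : 1 ≤ m (j+1))
    (hE : Einj n m) : Einj n (swapm m j) := by
  unfold Einj
  rw [e_swapm hj h1]
  exact hE.comp (Equiv.injective _)

lemma jstar_spec {n : ℕ} {α : List ℕ} {m : ℕ → ℕ}
    (hsum : α.sum = n) (hpos : ∀ x ∈ α, 0 < x)
    (hm : InM n α m) (hne : m ≠ atil α) :
    SafeP n α m (jstar n α m) ∧ ∀ j, jstar n α m < j → ¬ SafeP n α m j := by
  have hne' : {j | SafeP n α m j}.Nonempty := exists_safe hsum hpos hm hne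
  have hbdd : BddAbove {j | SafeP n α m j} := ⟨n, fun x hx => by have := hx.1; omega⟩
  constructor
  · exact Nat.sSup_mem hne' hbdd
  · intro j hj hSP
    have h2 : j ≤ jstar n α m := le_csSup hbdd hSP
    omega

lemma jstar_swapm {n : ℕ} {α : List ℕ} {m : ℕ → ℕ}
    (hsum : α.sum = n) (hpos : ∀ x ∈ α, 0 < x)
    (hm : InM n α m) (hE : Einj n m) (hne : m ≠ atil α) :
    jstar n α (swapm m (jstar n α m)) = jstar n α m := by
  obtain ⟨hs, habove⟩ := jstar_spec hsum hpos hm hne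
  set j0 := jstar n α m with hj0def
  obtain ⟨hj0, h1, hMs⟩ := hs
  have hmem : SafeP n α (swapm m j0) j0 := by
    refine ⟨hj0, ?_, ?_⟩
    · rw [swapm_at1]; omega
    · rw [swapm_swapm m j0 h1]; exact hm
  have hub : ∀ j ∈ {j | SafeP n α (swapm m j0) j}, j ≤ j0 := by
    intro j hj
    by_contra hc
    push_neg at hc
    exact no_safe_above hm hE ⟨hj0, h1, hMs⟩ habove j hc hj
  apply le_antisymm
  · exact csSup_le ⟨j0, hmem⟩ hub
  · exact le_csSup ⟨j0, hub⟩ hmem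


-- ALGEBRA LAYER

noncomputable def nu (n : ℕ) (m : ℕ → ℕ) : Fin n →₀ ℕ :=
  Finsupp.equivFunOnFinite.symm (fun i : Fin n => m i + (n - 1 - (i : ℕ)))

lemma nu_apply (n : ℕ) (m : ℕ → ℕ) (x : Fin n) : nu n m x = m x + (n - 1 - (x : ℕ)) := rfl

noncomputable def B (n : ℕ) (m : ℕ → ℕ) : MvPolynomial (Fin n) ℚ :=
  Asym n (monomial (nu n m) 1)

lemma Asym_sum {n : ℕ} {ι : Type*} (s : Finset ι) (f : ι → MvPolynomial (Fin n) ℚ) :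
    Asym n (∑ x ∈ s, f x) = ∑ x ∈ s, Asym n (f x) := by
  unfold Asym
  simp only [map_sum, Finset.smul_sum]
  exact Finset.sum_comm

lemma monomial_one_eq_prod {n : ℕ} (ν : Fin n →₀ ℕ) :
    (monomial ν (1:ℚ) : MvPolynomial (Fin n) ℚ) = ∏ j, (X j : MvPolynomial (Fin n) ℚ) ^ ν j := by
  rw [monomial_eq, C_1, one_mul, Finsupp.prod_fintype]
  intro i
  exact pow_zero _

lemma prod_monomial_one {n : ℕ} {ι : Type*} (s : Finset ι) (d : ι → (Fin n →₀ ℕ)) :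
    (∏ i ∈ s, (monomial (d i) (1:ℚ) : MvPolynomial (Fin n) ℚ)) = monomial (∑ i ∈ s, d i) 1 := by
  induction s using Finset.cons_induction with
  | empty => simp
  | cons a s ha ih =>
    rw [Finset.prod_cons, Finset.sum_cons, ih, monomial_mul, one_mul]

lemma asym_monomial_comp {n : ℕ} (ν : Fin n →₀ ℕ) (c : Equiv.Perm (Fin n)) :
    Asym n (monomial (ν.mapDomain ⇑c) 1)
      = (Equiv.Perm.sign c : ℤ) • Asym n (monomial ν 1) := by
  unfold Asym
  simp only [rename_monomial, Finset.smul_sum]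
  apply Fintype.sum_equiv (Equiv.mulRight c)
  intro σ
  have h1 : Finsupp.mapDomain ⇑σ (ν.mapDomain ⇑c) = Finsupp.mapDomain ⇑(σ * c) ν := by
    rw [← Finsupp.mapDomain_comp]
    rfl
  rw [h1]
  have h2 : Equiv.Perm.sign (σ * c) = Equiv.Perm.sign σ * Equiv.Perm.sign c := by
    rw [map_mul]
  show _ = (Equiv.Perm.sign c : ℤ) • ((Equiv.Perm.sign (σ * c) : ℤ) • _)
  rw [smul_smul, h2]
  congr 1
  rcases Int.units_eq_one_or (Equiv.Perm.sign c) with hh | hh <;> rw [hh] <;> push_cast <;> ring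

lemma asym_monomial_eq_zero {n : ℕ} (ν : Fin n →₀ ℕ) {p q : Fin n} (hpq : p ≠ q)
    (hv : ν p = ν q) : Asym n (monomial ν 1) = 0 := by
  have h1 : ν.mapDomain ⇑(Equiv.swap p q) = ν := by
    ext x
    rw [Finsupp.mapDomain_equiv_apply]
    rcases eq_or_ne x p with rfl | hxp
    · rw [Equiv.symm_swap, Equiv.swap_apply_left]
      exact hv.symm
    rcases eq_or_ne x q with rfl | hxq
    · rw [Equiv.symm_swap, Equiv.swap_apply_right]
      exact hv
    · rw [Equiv.symm_swap, Equiv.swap_apply_of_ne_of_ne hxp hxq]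
  have h2 := asym_monomial_comp ν (Equiv.swap p q)
  rw [h1, Equiv.Perm.sign_swap hpq] at h2
  have h3 : Asym n (monomial ν 1) + Asym n (monomial ν 1) = 0 := by
    nth_rewrite 2 [h2]
    simp
  have h4 : (2:ℚ) • Asym n (monomial ν 1) = 0 := by
    rw [two_smul]
    exact h3
  calc Asym n (monomial ν 1) = (2⁻¹ * 2 : ℚ) • Asym n (monomial ν 1) := by norm_num
    _ = (2⁻¹:ℚ) • ((2:ℚ) • Asym n (monomial ν 1)) := by rw [mul_smul]
    _ = 0 := by rw [h4, smul_zero]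

lemma nu_swapm {n : ℕ} {m : ℕ → ℕ} {j : ℕ} (hj : j + 1 < n) (h1 : 1 ≤ m (j+1)) :
    nu n (swapm m j)
      = (nu n m).mapDomain ⇑(Equiv.swap (⟨j, by omega⟩ : Fin n) ⟨j+1, hj⟩) := by
  ext x
  rw [Finsupp.mapDomain_equiv_apply, Equiv.symm_swap]
  have hfun := congrFun (e_swapm (m := m) hj h1) x
  simp only [Function.comp_apply] at hfun
  exact hfun

lemma B_swapm {n : ℕ} {m : ℕ → ℕ} {j : ℕ} (hj : j + 1 < n) (h1 : 1 ≤ m (j+1)) :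
    B n (swapm m j) = - B n m := by
  unfold B
  rw [nu_swapm hj h1, asym_monomial_comp, Equiv.Perm.sign_swap (by
    intro hc
    have := Fin.mk.injEq j (by omega : j < n) (j+1) hj
    rw [this] at hc
    omega)]
  push_cast
  rw [neg_smul, one_smul]

lemma B_eq_zero_of_not_einj {n : ℕ} {m : ℕ → ℕ} (h : ¬ Einj n m) : B n m = 0 := by
  unfold Einj at h
  rw [Function.not_injective_iff] at h
  obtain ⟨p, q, hval, hne⟩ := h
  exact asym_monomial_eq_zero (nu n m) hne (by rw [nu_apply, nu_apply]; exact hval)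

lemma deltaG_eq_asym (n : ℕ) (γ : Fin n → ℕ) :
    DeltaG n γ
      = Asym n (monomial (Finsupp.equivFunOnFinite.symm
          (fun j : Fin n => γ j + (n - 1 - (j : ℕ)))) 1) := by
  unfold DeltaG Asym
  rw [Matrix.det_apply]
  apply Finset.sum_congr rfl
  intro σ _
  rw [Units.smul_def]
  congr 1
  rw [rename_monomial]
  have : Finsupp.mapDomain ⇑σ (Finsupp.equivFunOnFinite.symm
      (fun j : Fin n => γ j + (n - 1 - (j : ℕ))))
      = Finsupp.equivFunOnFinite.symm ((fun j : Fin n => γ j + (n - 1 - (j : ℕ))) ∘ ⇑σ.symm) := by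
    ext x
    rw [Finsupp.mapDomain_equiv_apply]
    rfl
  rw [this, monomial_one_eq_prod]
  apply Fintype.prod_equiv σ
  intro i
  simp only [Matrix.of_apply, Finsupp.coe_equivFunOnFinite_symm, Function.comp_apply,
    Equiv.symm_apply_apply]

-- WT MACHINERY

def wt (n : ℕ) (a : Fin n → Fin n) : ℕ → ℕ :=
  fun v => (Finset.univ.filter (fun p => (a p : ℕ) = v)).card

lemma card_fin_filter_Ico {n l u : ℕ} (hu : u ≤ n) :
    ((Finset.univ : Finset (Fin n)).filter (fun p : Fin n => l ≤ (p:ℕ) ∧ (p:ℕ) < u)).card = u - l := by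
  have himg : ((Finset.univ : Finset (Fin n)).filter (fun p : Fin n => l ≤ (p:ℕ) ∧ (p:ℕ) < u)).image
      (fun p : Fin n => (p : ℕ)) = Finset.Ico l u := by
    ext x
    simp only [Finset.mem_image, Finset.mem_filter, Finset.mem_univ, true_and, Finset.mem_Ico]
    constructor
    · rintro ⟨p, hp, rfl⟩
      exact hp
    · rintro ⟨h1, h2⟩
      exact ⟨⟨x, by omega⟩, ⟨h1, h2⟩, rfl⟩
  have hcard := Finset.card_image_of_injective
    ((Finset.univ : Finset (Fin n)).filter (fun p : Fin n => l ≤ (p:ℕ) ∧ (p:ℕ) < u)) (Fin.val_injective)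
  rw [himg] at hcard
  rw [← hcard, Nat.card_Ico]

lemma psum_wt (n : ℕ) (a : Fin n → Fin n) (J : ℕ) :
    psum (wt n a) J = (Finset.univ.filter (fun p => (a p : ℕ) < J)).card := by
  induction J with
  | zero => simp [psum]
  | succ J ih =>
    rw [psum_succ, ih]
    have hsplit : (Finset.univ.filter (fun p : Fin n => (a p : ℕ) < J + 1))
        = (Finset.univ.filter (fun p => (a p : ℕ) < J))
            ∪ (Finset.univ.filter (fun p => (a p : ℕ) = J)) := by
      ext p
      simp only [Finset.mem_filter, Finset.mem_union, Finset.mem_univ, true_and]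
      omega
    rw [hsplit, Finset.card_union_of_disjoint]
    · rfl
    · rw [Finset.disjoint_left]
      intro p h1 h2
      rw [Finset.mem_filter] at h1 h2
      omega

lemma wt_support (n : ℕ) (a : Fin n → Fin n) (v : ℕ) (hv : n ≤ v) : wt n a v = 0 := by
  unfold wt
  rw [Finset.card_eq_zero, Finset.filter_eq_empty_iff]
  intro p _
  have := (a p).isLt
  omega

lemma psum_wt_n (n : ℕ) (a : Fin n → Fin n) : psum (wt n a) n = n := by
  rw [psum_wt]
  have : (Finset.univ.filter (fun p : Fin n => (a p : ℕ) < n)) = Finset.univ := by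
    rw [Finset.filter_eq_self]
    intro p _
    exact (a p).isLt
  rw [this, Finset.card_univ, Fintype.card_fin]

lemma monotone_lt_iff {n : ℕ} {a : Fin n → Fin n} (ha : Monotone a) (p : Fin n) (J : ℕ) :
    (a p : ℕ) < J ↔ (p : ℕ) < psum (wt n a) J := by
  rw [psum_wt]
  constructor
  · intro h
    have hsub : Finset.Iic p ⊆ Finset.univ.filter (fun q => (a q : ℕ) < J) := by
      intro q hq
      rw [Finset.mem_Iic] at hq
      rw [Finset.mem_filter]
      exact ⟨Finset.mem_univ _, by have := ha hq; omega⟩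
    have := Finset.card_le_card hsub
    rw [Fin.card_Iic] at this
    omega
  · intro h
    by_contra hc
    push_neg at hc
    have hsub : Finset.univ.filter (fun q => (a q : ℕ) < J) ⊆ Finset.Iio p := by
      intro q hq
      rw [Finset.mem_filter] at hq
      rw [Finset.mem_Iio]
      by_contra hqp
      push_neg at hqp
      have := ha hqp
      have : (a p : ℕ) ≤ (a q : ℕ) := this
      omega
    have := Finset.card_le_card hsub
    rw [Fin.card_Iio] at this
    omega

lemma monotone_eq_of_wt_eq {n : ℕ} {a b : Fin n → Fin n} (ha : Monotone a) (hb : Monotone b)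
    (h : wt n a = wt n b) : a = b := by
  funext p
  have key : ∀ J, ((a p : ℕ) < J ↔ (b p : ℕ) < J) := by
    intro J
    rw [monotone_lt_iff ha, monotone_lt_iff hb, h]
  apply Fin.ext
  have h1 := (key ((a p : ℕ) + 1)).1 (by omega)
  have h2 := (key ((b p : ℕ) + 1)).2 (by omega)
  omega

lemma fcond_wt_inM {n : ℕ} {α : List ℕ} (hsum : α.sum = n) (hpos : ∀ x ∈ α, 0 < x)
    {a : Fin n → Fin n} (hf : FCond n n α a) : InM n α (wt n a) := by
  refine ⟨fun v hv => wt_support n a v hv, psum_wt_n n a, ?_⟩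
  intro s hs
  have hs0 : 0 < s := compSet_pos α hpos hs
  have hsn : s < n := hsum ▸ compSet_lt α hpos hs
  refine ⟨(a ⟨s, hsn⟩ : ℕ), ?_⟩
  rw [psum_wt]
  have hstep : a ⟨s - 1, by omega⟩ < a ⟨s, hsn⟩ := by
    apply hf.2 ⟨s-1, by omega⟩ ⟨s, hsn⟩
    · show s = (s - 1) + 1
      omega
    · show (s - 1) + 1 ∈ compSet α
      rw [show s - 1 + 1 = s by omega]
      exact hs
  have hset : (Finset.univ.filter (fun p : Fin n => (a p : ℕ) < (a ⟨s, hsn⟩ : ℕ)))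
      = Finset.univ.filter (fun p : Fin n => (p : ℕ) < s) := by
    ext p
    simp only [Finset.mem_filter, Finset.mem_univ, true_and]
    constructor
    · intro h
      by_contra hc
      push_neg at hc
      have : (⟨s, hsn⟩ : Fin n) ≤ p := hc
      have := hf.1 this
      have : (a ⟨s, hsn⟩ : ℕ) ≤ (a p : ℕ) := this
      omega
    · intro h
      have hle : p ≤ (⟨s - 1, by omega⟩ : Fin n) := by
        show (p : ℕ) ≤ s - 1
        omega
      have := hf.1 hle
      have h2 : (a p : ℕ) ≤ (a ⟨s - 1, by omega⟩ : ℕ) := this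
      have h3 : (a ⟨s - 1, by omega⟩ : ℕ) < (a ⟨s, hsn⟩ : ℕ) := hstep
      omega
  rw [hset]
  have := card_fin_filter_Ico (n := n) (l := 0) (u := s) (by omega)
  simp only [Nat.zero_le, true_and] at this
  rw [this]
  omega

-- EXISTENCE

lemma exists_fcond_wt {n : ℕ} {α : List ℕ} (hsum : α.sum = n) (hpos : ∀ x ∈ α, 0 < x)
    {m : ℕ → ℕ} (hm : InM n α m) :
    ∃ a : Fin n → Fin n, FCond n n α a ∧ wt n a = m := by
  obtain ⟨hsupp, htot, hcov⟩ := hm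
  let aN : ℕ → ℕ := fun p => ((Finset.Icc 1 n).filter (fun J => psum m J ≤ p)).card
  have haN : ∀ p, aN p = ((Finset.Icc 1 n).filter (fun J => psum m J ≤ p)).card := fun _ => rfl
  have hchar : ∀ p J, 1 ≤ J → J ≤ n → (psum m J ≤ p ↔ J ≤ aN p) := by
    intro p J h1 h2
    constructor
    · intro h
      have hsub : Finset.Icc 1 J ⊆ (Finset.Icc 1 n).filter (fun J' => psum m J' ≤ p) := by
        intro J' hJ'
        rw [Finset.mem_Icc] at hJ'
        rw [Finset.mem_filter, Finset.mem_Icc]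
        exact ⟨⟨hJ'.1, by omega⟩, le_trans (psum_mono m hJ'.2) h⟩
      have := Finset.card_le_card hsub
      rw [Nat.card_Icc] at this
      rw [haN p]
      omega
    · intro h
      by_contra hc
      push_neg at hc
      have hsub : (Finset.Icc 1 n).filter (fun J' => psum m J' ≤ p) ⊆ Finset.Icc 1 (J-1) := by
        intro J' hJ'
        rw [Finset.mem_filter, Finset.mem_Icc] at hJ'
        rw [Finset.mem_Icc]
        refine ⟨hJ'.1.1, ?_⟩
        by_contra hc2
        push_neg at hc2
        have := psum_mono m (show J ≤ J' by omega)
        omega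
      have := Finset.card_le_card hsub
      rw [Nat.card_Icc] at this
      rw [haN p] at h
      omega
  have haNle : ∀ p, aN p ≤ n := by
    intro p
    have := Finset.card_le_card (Finset.filter_subset (fun J => psum m J ≤ p) (Finset.Icc 1 n))
    rw [Nat.card_Icc] at this
    rw [haN p]
    omega
  have hlow : ∀ p, psum m (aN p) ≤ p := by
    intro p
    rcases Nat.eq_zero_or_pos (aN p) with h0 | h0
    · rw [h0]
      simp [psum]
    · exact (hchar p (aN p) h0 (haNle p)).2 (le_refl _)
  have hhigh : ∀ p, p < n → p < psum m (aN p + 1) := by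
    intro p hp
    rcases Nat.lt_or_ge (aN p) n with h | h
    · by_contra hc
      push_neg at hc
      have := (hchar p (aN p + 1) (by omega) (by omega)).1 hc
      omega
    · have h1 : aN p = n := le_antisymm (haNle p) h
      rw [h1, psum_succ, htot, hsupp n (le_refl _)]
      omega
  have haNlt : ∀ p, p < n → aN p < n := by
    intro p hp
    by_contra hc
    push_neg at hc
    have h1 : aN p = n := le_antisymm (haNle p) hc
    have := hlow p
    rw [h1, htot] at this
    omega
  set a : Fin n → Fin n := fun p => ⟨aN ↑p, haNlt ↑p p.isLt⟩ with ha
  have haval : ∀ p : Fin n, (a p : ℕ) = aN ↑p := fun p => rfl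
  have hmono : Monotone a := by
    intro p q hpq
    rw [ha]
    show (⟨aN ↑p, _⟩ : Fin n) ≤ ⟨aN ↑q, _⟩
    rw [Fin.mk_le_mk, haN ↑p, haN ↑q]
    apply Finset.card_le_card
    intro J hJ
    rw [Finset.mem_filter] at hJ ⊢
    have hpq' : (p : ℕ) ≤ (q : ℕ) := hpq
    exact ⟨hJ.1, le_trans hJ.2 hpq'⟩
  refine ⟨a, ⟨hmono, ?_⟩, ?_⟩
  · intro i j hji hiS
    obtain ⟨J, hJ⟩ := hcov _ hiS
    have hs0 : (0:ℕ) < ↑i + 1 := by omega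
    have hsn : (↑i : ℕ) + 1 < n := by
      have := compSet_lt α hpos hiS
      omega
    have hJ1 : 1 ≤ J := by
      by_contra hc
      push_neg at hc
      interval_cases J
      simp [psum] at hJ
    have hJn : J ≤ n := by
      by_contra hc
      push_neg at hc
      have h2 : psum m J = psum m n :=
        psum_congr_zero (by omega) (fun i' hi' => hsupp i' hi')
      rw [htot] at h2
      omega
    show a i < a j
    rw [ha]
    show (⟨aN ↑i, _⟩ : Fin n) < ⟨aN ↑j, _⟩
    rw [Fin.mk_lt_mk, hji, haN ↑i, haN ((↑i:ℕ)+1)]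
    have hsubm : (Finset.Icc 1 n).filter (fun J' => psum m J' ≤ (↑i:ℕ))
        ⊆ (Finset.Icc 1 n).filter (fun J' => psum m J' ≤ (↑i:ℕ) + 1) := by
      intro J' hJ'
      rw [Finset.mem_filter] at hJ' ⊢
      exact ⟨hJ'.1, by omega⟩
    apply Finset.card_lt_card
    rw [Finset.ssubset_iff_of_subset hsubm]
    refine ⟨J, ?_, ?_⟩
    · rw [Finset.mem_filter, Finset.mem_Icc]
      exact ⟨⟨hJ1, hJn⟩, by omega⟩
    · rw [Finset.mem_filter]
      rintro ⟨-, hle⟩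
      omega
  · funext v
    rcases Nat.lt_or_ge v n with hv | hv
    · unfold wt
      have hset : (Finset.univ.filter (fun p : Fin n => ((a p : ℕ) = v)))
          = Finset.univ.filter (fun p : Fin n => psum m v ≤ (p:ℕ) ∧ (p:ℕ) < psum m (v+1)) := by
        ext p
        simp only [Finset.mem_filter, Finset.mem_univ, true_and, haval]
        constructor
        · intro h
          have h1 := hlow ↑p
          have h2 := hhigh ↑p p.isLt
          rw [h] at h1 h2
          exact ⟨h1, h2⟩
        · rintro ⟨h1, h2⟩
          have hw1 := hlow ↑p
          have hw2 := hhigh ↑p p.isLt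
          by_contra hne
          rcases Nat.lt_or_ge (aN ↑p) v with hlt | hge
          · have := psum_mono m (show aN ↑p + 1 ≤ v by omega)
            omega
          · have := psum_mono m (show v + 1 ≤ aN ↑p by omega)
            omega
      rw [hset, card_fin_filter_Ico (le_trans (psum_mono m (by omega : v + 1 ≤ n)) (le_of_eq htot))]
      rw [psum_succ]
      omega
    · rw [wt_support n _ v hv, hsupp v hv]

-- FINAL ASSEMBLY

lemma prod_X_mul_xdelta {n : ℕ} (a : Fin n → Fin n) :
    (∏ i, (X (a i) : MvPolynomial (Fin n) ℚ)) * xdelta n = monomial (nu n (wt n a)) 1 := by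
  have h1 : (∏ i, (X (a i) : MvPolynomial (Fin n) ℚ))
      = monomial (∑ i, Finsupp.single (a i) 1) 1 := by
    rw [← prod_monomial_one]
    apply Finset.prod_congr rfl
    intro i _
    rfl
  have h2 : xdelta n = monomial (∑ i : Fin n, Finsupp.single i (n - 1 - (i:ℕ))) 1 := by
    unfold xdelta
    rw [← prod_monomial_one]
    apply Finset.prod_congr rfl
    intro i _
    rw [X_pow_eq_monomial]
  rw [h1, h2, monomial_mul, one_mul]
  have hd : ((∑ i, Finsupp.single (a i) 1) + ∑ i : Fin n, Finsupp.single i (n - 1 - (i:ℕ)))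
      = nu n (wt n a) := by
    ext v
    rw [Finsupp.add_apply, Finsupp.finset_sum_apply, Finsupp.finset_sum_apply, nu_apply]
    have e1 : ∑ i : Fin n, (Finsupp.single (a i) 1) v = wt n a ↑v := by
      unfold wt
      rw [Finset.card_filter]
      apply Finset.sum_congr rfl
      intro i _
      rw [Finsupp.single_apply]
      simp [Fin.ext_iff]
    have e2 : ∑ i : Fin n, (Finsupp.single i (n - 1 - (i:ℕ))) v = n - 1 - (v:ℕ) := by
      have : ∀ i : Fin n, (Finsupp.single i (n - 1 - (i:ℕ))) v
          = if i = v then n - 1 - (i:ℕ) else 0 := by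
        intro i
        rw [Finsupp.single_apply]
      rw [Finset.sum_congr rfl (fun i _ => this i), Finset.sum_ite_eq' Finset.univ v]
      rw [if_pos (Finset.mem_univ v)]
    rw [e1, e2]
  rw [hd]

lemma fqs_mul_xdelta (n : ℕ) (α : List ℕ) :
    Fqs n n α * xdelta n
      = ∑ a ∈ Finset.univ.filter (fun a : Fin n → Fin n => FCond n n α a),
          monomial (nu n (wt n a)) (1:ℚ) := by
  unfold Fqs
  rw [Finset.sum_mul, Finset.sum_filter]
  apply Finset.sum_congr rfl
  intro a _
  by_cases hf : FCond n n α a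
  · rw [if_pos hf, if_pos hf, prod_X_mul_xdelta]
  · rw [if_neg hf, if_neg hf, zero_mul]

theorem main1 {n : ℕ} {α : List ℕ} (hα : IsComposition n α) :
    Asym n (Fqs n n α * xdelta n) = DeltaG n (pad n α) := by
  obtain ⟨hsum, hpos⟩ := hα
  set Afin := Finset.univ.filter (fun a : Fin n → Fin n => FCond n n α a) with hAfin
  set Mfin := Afin.image (wt n) with hMfin
  have hmemInM : ∀ m ∈ Mfin, InM n α m := by
    intro m hm
    rw [hMfin, Finset.mem_image] at hm
    obtain ⟨a, ha, rfl⟩ := hm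
    rw [hAfin, Finset.mem_filter] at ha
    exact fcond_wt_inM hsum hpos ha.2
  have hInMmem : ∀ m', InM n α m' → m' ∈ Mfin := by
    intro m' hm'
    obtain ⟨a, hfc, hw⟩ := exists_fcond_wt hsum hpos hm'
    rw [hMfin, Finset.mem_image]
    exact ⟨a, by rw [hAfin, Finset.mem_filter]; exact ⟨Finset.mem_univ _, hfc⟩, hw⟩
  have hatilmem : atil α ∈ Mfin := hInMmem _ (InM_atil n α hsum hpos)
  have hzero : ∑ m ∈ Mfin.erase (atil α), B n m = 0 := by
    apply Finset.sum_involution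
      (g := fun m _ => if Einj n m then swapm m (jstar n α m) else m)
    -- h : f a + f (g a) = 0
    · intro m hm
      by_cases hE : Einj n m
      · rw [if_pos hE]
        rw [Finset.mem_erase] at hm
        obtain ⟨hne, hmem⟩ := hm
        obtain ⟨⟨hjn, h1, _⟩, _⟩ := jstar_spec hsum hpos (hmemInM m hmem) hne
        rw [B_swapm hjn h1]
        exact add_neg_cancel _
      · rw [if_neg hE, B_eq_zero_of_not_einj hE, add_zero]
    -- g_ne
    · intro m hm hf
      by_cases hE : Einj n m
      · rw [if_pos hE]
        rw [Finset.mem_erase] at hm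
        obtain ⟨hne, hmem⟩ := hm
        obtain ⟨⟨hjn, h1, _⟩, _⟩ := jstar_spec hsum hpos (hmemInM m hmem) hne
        intro heq
        have hv := congrFun heq (jstar n α m + 1)
        rw [swapm_at1] at hv
        exact einj_adj hE (j := jstar n α m) (d := 1) (by omega) (by omega) (by omega)
      · rw [if_neg hE]
        exact absurd (B_eq_zero_of_not_einj hE) hf
    -- g_mem
    · intro m hm
      by_cases hE : Einj n m
      · rw [if_pos hE]
        rw [Finset.mem_erase] at hm
        obtain ⟨hne, hmem⟩ := hm
        obtain ⟨⟨hjn, h1, hMsw⟩, _⟩ := jstar_spec hsum hpos (hmemInM m hmem) hne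
        rw [Finset.mem_erase]
        constructor
        · intro heq
          apply hne
          have hback : swapm (swapm m (jstar n α m)) (jstar n α m) = m :=
            swapm_swapm m _ h1
          have hsafe : SafeP n α (atil α) (jstar n α m) := by
            rw [← heq]
            refine ⟨hjn, ?_, ?_⟩
            · rw [swapm_at1]
              omega
            · rw [hback]
              exact hmemInM m hmem
          have := safe_atil hsum hpos hsafe
          rw [← heq, hback] at this
          exact this.trans heq
        · exact hInMmem _ hMsw
      · rw [if_neg hE]
        exact hm
    -- g_inv
    · intro m hm
      by_cases hE : Einj n m
      · rw [Finset.mem_erase] at hm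
        obtain ⟨hne, hmem⟩ := hm
        obtain ⟨⟨hjn, h1, hMsw⟩, _⟩ := jstar_spec hsum hpos (hmemInM m hmem) hne
        have hE' : Einj n (swapm m (jstar n α m)) := Einj_swapm hjn h1 hE
        simp only [if_pos hE, if_pos hE']
        rw [jstar_swapm hsum hpos (hmemInM m hmem) hE hne]
        exact swapm_swapm m _ h1
      · simp only [if_neg hE]
  rw [fqs_mul_xdelta, Asym_sum]
  have hinj : ∀ x ∈ Afin, ∀ y ∈ Afin, wt n x = wt n y → x = y := by
    intro x hx y hy hxy
    rw [hAfin, Finset.mem_filter] at hx hy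
    exact monotone_eq_of_wt_eq hx.2.1 hy.2.1 hxy
  have hsum_img : ∑ m ∈ Mfin, B n m
      = ∑ a ∈ Afin, Asym n (monomial (nu n (wt n a)) (1:ℚ)) := by
    rw [hMfin]
    exact Finset.sum_image hinj
  rw [← hsum_img, ← Finset.add_sum_erase _ _ hatilmem, hzero, add_zero]
  rw [deltaG_eq_asym]
  rfl

end AF

/-- For a composition α of n, 𝒜ₙ(F_α(X)·x^{δₙ}) = Δ_{α̃}(X); equivalently
s_{α̃}(X) = (1/Δ(X))·𝒜ₙ(F_α(X)·x^{δₙ}). -/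
theorem antisymmetrized_fundamental (n : ℕ) (α : List ℕ) (hα : IsComposition n α) :
    Asym n (Fqs n n α * xdelta n) = DeltaG n (pad n α) ∧
    schurG n (pad n α) = toK n (Asym n (Fqs n n α * xdelta n)) / toK n (Vand n) := by
  
  have h1 := AF.main1 hα
  refine ⟨h1, ?_⟩
  unfold schurG
  rw [h1]
end

section
/- Let α be a composition of n with k parts. Define a map I on the set of exponent sequences b = (b₁,…,bₙ) arising from monomials of F_α (i.e. b with the strictness conditions of α) other than the fixed point (α₁,…,α_k,0,…,0), as follows: let s < k be maximal such that (b₁,…,b_s) = (α₁,…,α_s), let r ≥ 2 be minimal with b_{s+1}+⋯+b_{s+r} = α_{s+1} and b_{s+r} > 0, and replace (b_{s+r-1}, b_{s+r}) by (b_{s+r}-1, b_{s+r-1}+1). Then I is an involution on this set, mapping monomials of F_α to monomials of F_α. -/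
open MvPolynomial Finset
open scoped Classical

/-- b is the exponent sequence of a monomial of F_α: b_i counts occurrences of i in some
valid weakly increasing sequence a with the strictness pattern of α. -/
def IsFMono (n : ℕ) (α : List ℕ) (b : Fin n → ℕ) : Prop :=
  ∃ a : Fin n → Fin n, FCond n n α a ∧
    ∀ i : Fin n, b i = (Finset.univ.filter (fun j : Fin n => a j = i)).card

/-- The map replacing (b_{s+r-1}, b_{s+r}) by (b_{s+r}-1, b_{s+r-1}+1)
(positions written 1-based; here 0-based indices s+r-2, s+r-1). -/
noncomputable def flipAt (n : ℕ) (s r : ℕ) (b : Fin n → ℕ) : Fin n → ℕ := fun t =>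
  if h1 : (t : ℕ) = s + r - 2 ∧ s + r - 1 < n then b ⟨s + r - 1, h1.2⟩ - 1
  else if h2 : (t : ℕ) = s + r - 1 ∧ s + r - 2 < n then b ⟨s + r - 2, h2.2⟩ + 1
  else b t


noncomputable def Cum (n : ℕ) (b : Fin n → ℕ) (v : ℕ) : ℕ :=
  ∑ i ∈ Finset.univ.filter (fun i : Fin n => (i : ℕ) < v), b i

lemma Cum_mono (n : ℕ) (b : Fin n → ℕ) {v w : ℕ} (h : v ≤ w) : Cum n b v ≤ Cum n b w := by
  apply Finset.sum_le_sum_of_subset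
  apply Finset.monotone_filter_right
  intro i _ hi; exact lt_of_lt_of_le hi h

lemma Cum_zero (n : ℕ) (b : Fin n → ℕ) : Cum n b 0 = 0 := by
  unfold Cum
  rw [Finset.filter_false_of_mem (by intro i _; omega)]
  simp

lemma Cum_succ (n : ℕ) (b : Fin n → ℕ) (v : ℕ) (h : v < n) :
    Cum n b (v + 1) = Cum n b v + b ⟨v, h⟩ := by
  unfold Cum
  have : (Finset.univ.filter (fun i : Fin n => (i : ℕ) < v + 1))
      = insert ⟨v, h⟩ (Finset.univ.filter (fun i : Fin n => (i : ℕ) < v)) := by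
    ext i
    simp only [mem_filter, mem_univ, true_and, mem_insert, Fin.ext_iff]
    omega
  rw [this, Finset.sum_insert (by simp)]
  ring

lemma Cum_of_ge (n : ℕ) (b : Fin n → ℕ) (v : ℕ) (h : n ≤ v) : Cum n b v = ∑ i, b i := by
  unfold Cum
  congr 1
  rw [Finset.filter_true_of_mem]
  intro i _; exact lt_of_lt_of_le i.isLt h

lemma card_filter_Ico (n c d : ℕ) (hd : d ≤ n) :
    (Finset.univ.filter fun j : Fin n => c ≤ (j : ℕ) ∧ (j : ℕ) < d).card = d - c := by
  rw [← Nat.card_Ico c d]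
  apply Finset.card_bij (fun (j : Fin n) _ => (j : ℕ))
  · intro a ha; simp only [mem_filter, mem_univ, true_and] at ha; simp [Finset.mem_Ico]; omega
  · intro a _ b _ h; exact Fin.ext h
  · intro m hm
    simp only [Finset.mem_Ico] at hm
    exact ⟨⟨m, lt_of_lt_of_le hm.2 hd⟩, by simp [hm.1, hm.2], rfl⟩

lemma length_le_sum (l : List ℕ) (h : ∀ x ∈ l, 0 < x) : l.length ≤ l.sum := by
  induction l with
  | nil => simp
  | cons a t ih =>
    simp only [List.length_cons, List.sum_cons]
    have h1 := h a (by simp)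
    have h2 := ih (fun x hx => h x (by simp [hx]))
    omega

lemma sum_take_le (l : List ℕ) {i j : ℕ} (hij : i ≤ j) : (l.take i).sum ≤ (l.take j).sum := by
  conv_rhs => rw [← List.take_append_drop i (l.take j)]
  rw [List.sum_append, List.take_take, min_eq_left hij]
  omega

lemma sum_take_lt (l : List ℕ) (hpos : ∀ x ∈ l, 0 < x) {i j : ℕ} (hij : i < j)
    (hj : j ≤ l.length) : (l.take i).sum < (l.take j).sum := by
  induction j with
  | zero => omega
  | succ j ih =>
    have hjl : j < l.length := hj
    rw [List.sum_take_succ l j hjl]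
    have hpos' : 0 < l[j] := hpos _ (List.getElem_mem _)
    rcases Nat.lt_or_ge i j with h | h
    · have := ih h (le_of_lt hjl); omega
    · have : i = j := by omega
      subst this; omega

lemma sum_range_getD (l : List ℕ) (w : ℕ) (h : w ≤ l.length) :
    ∑ i ∈ Finset.range w, l.getD i 0 = (l.take w).sum := by
  induction w with
  | zero => simp
  | succ w ih =>
    rw [Finset.sum_range_succ, List.sum_take_succ l w h, ih (by omega),
      List.getD_eq_getElem l 0 h]

lemma filter_fin_sum (n : ℕ) (f : Fin n → ℕ) (g : ℕ → ℕ) (w : ℕ) (hw : w ≤ n)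
    (hfg : ∀ i : Fin n, (i : ℕ) < w → f i = g (i : ℕ)) :
    ∑ i ∈ Finset.univ.filter (fun i : Fin n => (i : ℕ) < w), f i = ∑ i ∈ Finset.range w, g i := by
  apply Finset.sum_bij (fun (a : Fin n) _ => (a : ℕ))
  · intro a ha; simp only [mem_filter, mem_univ, true_and] at ha; simpa using ha
  · intro a _ b _ h; exact Fin.ext h
  · intro m hm
    simp only [Finset.mem_range] at hm
    exact ⟨⟨m, lt_of_lt_of_le hm hw⟩, by simp [hm], rfl⟩
  · intro a ha; simp only [mem_filter, mem_univ, true_and] at ha; exact hfg a ha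

lemma compSet_bounds {n : ℕ} {α : List ℕ} (hα : IsComposition n α) {m : ℕ}
    (hm : m ∈ compSet α) : 1 ≤ m ∧ m < n := by
  obtain ⟨j, hj0, hjl, hjs⟩ := hm
  obtain ⟨hsum, hpos⟩ := hα
  have h1 : j ≤ (α.take j).sum := by
    have := length_le_sum (α.take j) (fun x hx => hpos x (List.mem_of_mem_take hx))
    rwa [List.length_take, min_eq_left (le_of_lt hjl)] at this
  have h2 : (α.take j).sum < (α.take α.length).sum := sum_take_lt α hpos hjl le_rfl
  rw [List.take_length] at h2
  omega

lemma isFMono_sum_breaks (n : ℕ) (α : List ℕ) (hα : IsComposition n α) (b : Fin n → ℕ)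
    (hb : IsFMono n α b) :
    (∑ i, b i) = n ∧ ∀ m ∈ compSet α, ∃ v, Cum n b v = m := by
  obtain ⟨a, ⟨hmono, hstrict⟩, hcount⟩ := hb
  have key : ∀ v : ℕ, Cum n b v = (univ.filter fun j : Fin n => (a j : ℕ) < v).card := by
    intro v
    rw [Finset.card_eq_sum_card_fiberwise
      (f := a) (t := univ.filter fun i : Fin n => (i : ℕ) < v)
      (by intro j hj; simp only [coe_filter, mem_univ, true_and, Set.mem_setOf_eq] at hj ⊢; exact hj)]
    unfold Cum
    apply Finset.sum_congr rfl
    intro i hi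
    simp only [mem_filter, mem_univ, true_and] at hi
    rw [hcount i]
    congr 1
    ext j
    simp only [mem_filter, mem_univ, true_and]
    constructor
    · intro h; exact ⟨by rw [h]; exact hi, h⟩
    · rintro ⟨_, h⟩; exact h
  have hsum : ∑ i, b i = n := by
    have h1 := key n
    rw [Cum_of_ge n b n le_rfl] at h1
    rw [h1]
    rw [Finset.filter_true_of_mem (fun j _ => (a j).isLt)]
    simp
  refine ⟨hsum, ?_⟩
  intro m hm
  obtain ⟨hm1, hmn⟩ := compSet_bounds hα hm
  have hm1n : m - 1 < n := by omega
  have hstep : a ⟨m - 1, hm1n⟩ < a ⟨m, hmn⟩ := by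
    apply hstrict _ _ (by simp; omega)
    simp only []
    have : m - 1 + 1 = m := by omega
    rw [this]; exact hm
  refine ⟨(a ⟨m - 1, hm1n⟩ : ℕ) + 1, ?_⟩
  rw [key]
  have hset : (univ.filter fun j : Fin n => (a j : ℕ) < (a ⟨m - 1, hm1n⟩ : ℕ) + 1)
      = univ.filter fun j : Fin n => 0 ≤ (j : ℕ) ∧ (j : ℕ) < m := by
    ext j
    simp only [mem_filter, mem_univ, true_and, true_and]
    constructor
    · intro h
      refine ⟨by omega, ?_⟩
      by_contra hc
      push_neg at hc
      have : a ⟨m, hmn⟩ ≤ a j := hmono (by simp only [Fin.le_def]; omega)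
      have : (a ⟨m - 1, hm1n⟩ : ℕ) < (a j : ℕ) := lt_of_lt_of_le hstep this
      omega
    · rintro ⟨-, h⟩
      have : a j ≤ a ⟨m - 1, hm1n⟩ := hmono (by simp only [Fin.le_def]; omega)
      omega
  rw [hset, card_filter_Ico n 0 m (le_of_lt hmn)]
  omega

lemma isFMono_intro (n : ℕ) (α : List ℕ) (hn : 0 < n) (b : Fin n → ℕ)
    (h1 : ∑ i, b i = n) (h2 : ∀ m ∈ compSet α, ∃ v, Cum n b v = m) : IsFMono n α b := by
  have Htop : ∀ j : Fin n, ∃ t, (j : ℕ) < Cum n b (t + 1) := by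
    intro j
    refine ⟨n - 1, ?_⟩
    have : n - 1 + 1 = n := by omega
    rw [this, Cum_of_ge n b n le_rfl, h1]
    exact j.isLt
  have find_lt : ∀ j : Fin n, Nat.find (Htop j) < n := by
    intro j
    by_contra hc
    push_neg at hc
    have h0 : 0 < Nat.find (Htop j) := by omega
    apply Nat.find_min (Htop j) (m := Nat.find (Htop j) - 1) (by omega)
    have : Nat.find (Htop j) - 1 + 1 = Nat.find (Htop j) := by omega
    rw [this, Cum_of_ge n b _ hc, h1]
    exact j.isLt
  let a : Fin n → Fin n := fun j => ⟨Nat.find (Htop j), find_lt j⟩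
  have hval : ∀ j : Fin n, (a j : ℕ) = Nat.find (Htop j) := fun _ => rfl
  have ha_iff : ∀ j i : Fin n,
      a j = i ↔ Cum n b (i : ℕ) ≤ (j : ℕ) ∧ (j : ℕ) < Cum n b ((i : ℕ) + 1) := by
    intro j i
    rw [Fin.ext_iff, hval j]
    constructor
    · intro h
      constructor
      · rcases Nat.eq_zero_or_pos (i : ℕ) with h0 | h0
        · rw [h0, Cum_zero]; omega
        · have := Nat.find_min (Htop j) (m := (i : ℕ) - 1) (by omega)
          have heq : (i : ℕ) - 1 + 1 = (i : ℕ) := by omega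
          rw [heq] at this
          omega
      · have := Nat.find_spec (Htop j)
        rwa [h] at this
    · rintro ⟨hle, hlt⟩
      have hfle : Nat.find (Htop j) ≤ (i : ℕ) := Nat.find_le hlt
      rcases Nat.lt_or_ge (Nat.find (Htop j)) (i : ℕ) with hf | hf
      · exfalso
        have := Nat.find_spec (Htop j)
        have hc : Cum n b (Nat.find (Htop j) + 1) ≤ Cum n b (i : ℕ) :=
          Cum_mono n b (by omega)
        omega
      · omega
  refine ⟨a, ⟨?_, ?_⟩, ?_⟩
  · intro j j' hjj'
    rw [Fin.le_def, hval j, hval j']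
    exact Nat.find_mono (p := fun t => (j : ℕ) < Cum n b (t + 1))
      (q := fun t => (j' : ℕ) < Cum n b (t + 1)) (fun t ht => lt_of_le_of_lt hjj' ht)
  · intro i j hji hmem
    obtain ⟨v, hv⟩ := h2 _ hmem
    have hv1 : 1 ≤ v := by
      rcases Nat.eq_zero_or_pos v with h0 | h0
      · rw [h0, Cum_zero] at hv; omega
      · exact h0
    have hai : Nat.find (Htop i) ≤ v - 1 := by
      apply Nat.find_le
      have hvv : v - 1 + 1 = v := by omega
      rw [hvv, hv]
      omega
    have haj : v ≤ Nat.find (Htop j) := by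
      by_contra hc
      push_neg at hc
      have hspec := Nat.find_spec (Htop j)
      have hmono2 : Cum n b (Nat.find (Htop j) + 1) ≤ Cum n b v := Cum_mono n b (by omega)
      omega
    rw [Fin.lt_def, hval i, hval j]
    omega
  · intro i
    have hfib : (univ.filter fun j : Fin n => a j = i)
        = univ.filter fun j : Fin n =>
            Cum n b (i : ℕ) ≤ (j : ℕ) ∧ (j : ℕ) < Cum n b ((i : ℕ) + 1) := by
      ext j
      simp only [mem_filter, mem_univ, true_and]
      exact ha_iff j i
    have hub : Cum n b ((i : ℕ) + 1) ≤ n := by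
      have := Cum_mono n b (show (i : ℕ) + 1 ≤ n from i.isLt)
      rwa [Cum_of_ge n b n le_rfl, h1] at this
    rw [hfib, card_filter_Ico n _ _ hub, Cum_succ n b (i : ℕ) i.isLt]
    have : (⟨(i : ℕ), i.isLt⟩ : Fin n) = i := rfl
    rw [this]
    omega

lemma flipAt_eq (n s r : ℕ) (hr2 : 2 ≤ r) (hrn : s + r ≤ n) (f : Fin n → ℕ) (t : Fin n) :
    flipAt n s r f t =
      if t = (⟨s + r - 2, by omega⟩ : Fin n) then f ⟨s + r - 1, by omega⟩ - 1
      else if t = (⟨s + r - 1, by omega⟩ : Fin n) then f ⟨s + r - 2, by omega⟩ + 1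
      else f t := by
  unfold flipAt
  by_cases h1 : (t : ℕ) = s + r - 2
  · rw [dif_pos ⟨h1, by omega⟩, if_pos (Fin.ext h1)]
  · rw [dif_neg (by intro h; exact h1 h.1), if_neg (by intro h; apply h1; rw [h])]
    by_cases h2 : (t : ℕ) = s + r - 1
    · rw [dif_pos ⟨h2, by omega⟩, if_pos (Fin.ext h2)]
    · rw [dif_neg (by intro h; exact h2 h.1), if_neg (by intro h; apply h2; rw [h])]

lemma flipAt_invol (n s r : ℕ) (hr2 : 2 ≤ r) (hrn : s + r ≤ n) (b : Fin n → ℕ)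
    (hpos : 0 < b ⟨s + r - 1, by omega⟩) : flipAt n s r (flipAt n s r b) = b := by
  have hPQ : (⟨s + r - 2, by omega⟩ : Fin n) ≠ (⟨s + r - 1, by omega⟩ : Fin n) := by
    simp only [ne_eq, Fin.ext_iff]; omega
  funext t
  rw [flipAt_eq n s r hr2 hrn _ t]
  by_cases h1 : t = (⟨s + r - 2, by omega⟩ : Fin n)
  · rw [if_pos h1, flipAt_eq n s r hr2 hrn b, if_neg (Ne.symm hPQ), if_pos rfl, h1]
    simp
  · rw [if_neg h1]
    by_cases h2 : t = (⟨s + r - 1, by omega⟩ : Fin n)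
    · rw [if_pos h2, flipAt_eq n s r hr2 hrn b, if_pos rfl, h2]
      omega
    · rw [if_neg h2, flipAt_eq n s r hr2 hrn b t, if_neg h1, if_neg h2]

/-- The ELW sign-reversing involution I on the non-fixed monomials of F_α is well defined
and is an involution. -/
theorem involution_I (n : ℕ) (α : List ℕ) (hα : IsComposition n α)
    (b : Fin n → ℕ) (hb : IsFMono n α b) (hne : b ≠ pad n α)
    (s r : ℕ) (hs : s < α.length)
    (hpre : ∀ t : Fin n, (t : ℕ) < s → b t = pad n α t)
    (hmax : ∀ h : s < n, b ⟨s, h⟩ ≠ pad n α ⟨s, h⟩)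
    (hr2 : 2 ≤ r) (hrn : s + r ≤ n)
    (hsum : ∑ t ∈ Finset.univ.filter (fun t : Fin n => s ≤ (t : ℕ) ∧ (t : ℕ) < s + r), b t
      = α.getD s 0)
    (hlast : 0 < b ⟨s + r - 1, by omega⟩)
    (hmin : ∀ r', 2 ≤ r' → r' < r → ∀ h : s + r' - 1 < n,
      ¬ ((∑ t ∈ Finset.univ.filter
            (fun t : Fin n => s ≤ (t : ℕ) ∧ (t : ℕ) < s + r'), b t) = α.getD s 0 ∧
          0 < b ⟨s + r' - 1, h⟩)) :
    IsFMono n α (flipAt n s r b) ∧ flipAt n s r b ≠ pad n α ∧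
      flipAt n s r (flipAt n s r b) = b := by
  obtain ⟨hαsum, hαpos⟩ := hα
  have hlen : α.length ≤ n := by rw [← hαsum]; exact length_le_sum α hαpos
  have hsn : s < n := lt_of_lt_of_le hs hlen
  have hn : 0 < n := by omega
  have hp : s + r - 2 < n := by omega
  have hq : s + r - 1 < n := by omega
  have hbQ : 0 < b ⟨s + r - 1, hq⟩ := hlast
  set b' := flipAt n s r b with hb'def
  have hflip : ∀ t : Fin n, b' t =
      if t = (⟨s + r - 2, hp⟩ : Fin n) then b ⟨s + r - 1, hq⟩ - 1
      else if t = (⟨s + r - 1, hq⟩ : Fin n) then b ⟨s + r - 2, hp⟩ + 1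
      else b t := fun t => flipAt_eq n s r hr2 hrn b t
  have hPQ : (⟨s + r - 2, hp⟩ : Fin n) ≠ (⟨s + r - 1, hq⟩ : Fin n) := by
    simp only [ne_eq, Fin.ext_iff]; omega
  have hsum_out : ∀ T : Finset (Fin n), (⟨s + r - 2, hp⟩ : Fin n) ∉ T →
      (⟨s + r - 1, hq⟩ : Fin n) ∉ T → ∑ t ∈ T, b' t = ∑ t ∈ T, b t := by
    intro T h1 h2
    apply Finset.sum_congr rfl
    intro t ht
    have e1 : t ≠ ⟨s + r - 2, hp⟩ := by rintro rfl; exact h1 ht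
    have e2 : t ≠ ⟨s + r - 1, hq⟩ := by rintro rfl; exact h2 ht
    rw [hflip t, if_neg e1, if_neg e2]
  have hsum_in : ∀ T : Finset (Fin n), (⟨s + r - 2, hp⟩ : Fin n) ∈ T →
      (⟨s + r - 1, hq⟩ : Fin n) ∈ T → ∑ t ∈ T, b' t = ∑ t ∈ T, b t := by
    intro T h1 h2
    have h2' : (⟨s + r - 1, hq⟩ : Fin n) ∈ T.erase ⟨s + r - 2, hp⟩ :=
      Finset.mem_erase.mpr ⟨Ne.symm hPQ, h2⟩
    rw [← Finset.add_sum_erase T b' h1, ← Finset.add_sum_erase _ b' h2',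
        ← Finset.add_sum_erase T b h1, ← Finset.add_sum_erase _ b h2',
        hsum_out ((T.erase ⟨s + r - 2, hp⟩).erase ⟨s + r - 1, hq⟩)
          (fun h => Finset.notMem_erase _ _ (Finset.mem_of_mem_erase h))
          (Finset.notMem_erase _ _)]
    have e1 : b' ⟨s + r - 2, hp⟩ = b ⟨s + r - 1, hq⟩ - 1 := by rw [hflip, if_pos rfl]
    have e2 : b' ⟨s + r - 1, hq⟩ = b ⟨s + r - 2, hp⟩ + 1 := by
      rw [hflip, if_neg (Ne.symm hPQ), if_pos rfl]
    rw [e1, e2]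
    omega
  have hcum_lo : ∀ v : ℕ, v ≤ s + r - 2 → Cum n b' v = Cum n b v := by
    intro v hv
    apply hsum_out
    · simp only [mem_filter, mem_univ, true_and, Fin.val_mk]; omega
    · simp only [mem_filter, mem_univ, true_and, Fin.val_mk]; omega
  have hcum_hi : ∀ v : ℕ, s + r ≤ v → Cum n b' v = Cum n b v := by
    intro v hv
    apply hsum_in
    · simp only [mem_filter, mem_univ, true_and, Fin.val_mk]; omega
    · simp only [mem_filter, mem_univ, true_and, Fin.val_mk]; omega
  have hpref : ∀ w : ℕ, w ≤ s → Cum n b w = (α.take w).sum := by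
    intro w hw
    unfold Cum
    rw [filter_fin_sum n b (fun i => α.getD i 0) w (by omega)
      (fun i hi => hpre i (by omega))]
    exact sum_range_getD α w (by omega)
  have hblock : Cum n b (s + r) = Cum n b s + ∑ t ∈ Finset.univ.filter
      (fun t : Fin n => s ≤ (t : ℕ) ∧ (t : ℕ) < s + r), b t := by
    unfold Cum
    rw [← Finset.sum_union (by
      rw [Finset.disjoint_left]
      intro i h1 h2
      simp only [mem_filter, mem_univ, true_and] at h1 h2
      omega)]
    congr 1
    ext i
    simp only [mem_union, mem_filter, mem_univ, true_and]
    omega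
  have hM : Cum n b (s + r) = (α.take (s + 1)).sum := by
    rw [hblock, hsum, hpref s le_rfl, List.sum_take_succ α s hs,
      List.getD_eq_getElem α 0 hs]
  obtain ⟨hbsum, hbbrk⟩ := isFMono_sum_breaks n α ⟨hαsum, hαpos⟩ b hb
  have hb'sum : ∑ i, b' i = n := by
    rw [hsum_in Finset.univ (mem_univ _) (mem_univ _)]
    exact hbsum
  have hb'brk : ∀ m ∈ compSet α, ∃ v, Cum n b' v = m := by
    intro m hm
    obtain ⟨j, hj0, hjlen, hjsum⟩ := hm
    rcases Nat.lt_or_ge j (s + 1) with hcase | hcase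
    · exact ⟨j, by rw [hcum_lo j (by omega), hpref j (by omega)]; exact hjsum⟩
    rcases Nat.eq_or_lt_of_le hcase with hcase2 | hcase2
    · refine ⟨s + r, ?_⟩
      rw [hcum_hi (s + r) le_rfl, hM, hcase2]
      exact hjsum
    · obtain ⟨v, hv⟩ := hbbrk m ⟨j, hj0, hjlen, hjsum⟩
      have hmgt : (α.take (s + 1)).sum < m := by
        rw [← hjsum]
        exact sum_take_lt α hαpos (by omega) (le_of_lt hjlen)
      have hvgt : s + r ≤ v := by
        by_contra hc
        push_neg at hc
        have hmm := Cum_mono n b (le_of_lt hc)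
        rw [hv, hM] at hmm
        omega
      exact ⟨v, by rw [hcum_hi v hvgt]; exact hv⟩
  refine ⟨isFMono_intro n α hn b' hb'sum hb'brk, ?_,
    flipAt_invol n s r hr2 hrn b hbQ⟩
  intro heq
  have hS := congrFun heq (⟨s, hsn⟩ : Fin n)
  have hpadS : pad n α ⟨s, hsn⟩ = α.getD s 0 := rfl
  rcases Nat.eq_or_lt_of_le hr2 with hr2' | hr3
  · -- r = 2
    have hPS : (⟨s, hsn⟩ : Fin n) = (⟨s + r - 2, hp⟩ : Fin n) := Fin.ext (by simp; omega)
    have hset : Finset.univ.filter (fun t : Fin n => s ≤ (t : ℕ) ∧ (t : ℕ) < s + r)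
        = {(⟨s, hsn⟩ : Fin n), (⟨s + r - 1, hq⟩ : Fin n)} := by
      ext t
      simp only [mem_filter, mem_univ, true_and, mem_insert, mem_singleton, Fin.ext_iff,
        Fin.val_mk]
      omega
    rw [hset, Finset.sum_pair (by simp only [ne_eq, Fin.ext_iff, Fin.val_mk]; omega)] at hsum
    have hbS : b' ⟨s, hsn⟩ = b ⟨s + r - 1, hq⟩ - 1 := by
      rw [hflip, if_pos hPS]
    rw [hbS, hpadS] at hS
    omega
  · -- r ≥ 3
    have hSP : (⟨s, hsn⟩ : Fin n) ≠ (⟨s + r - 2, hp⟩ : Fin n) := by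
      simp only [ne_eq, Fin.ext_iff, Fin.val_mk]; omega
    have hSQ : (⟨s, hsn⟩ : Fin n) ≠ (⟨s + r - 1, hq⟩ : Fin n) := by
      simp only [ne_eq, Fin.ext_iff, Fin.val_mk]; omega
    have hbS : b' ⟨s, hsn⟩ = b ⟨s, hsn⟩ := by
      rw [hflip, if_neg hSP, if_neg hSQ]
    rw [hbS] at hS
    exact hmax hsn hS
end

section
/- If P(X) is a homogeneous symmetric polynomial of degree n in n variables with fundamental quasisymmetric expansion P = Σ_α a_α F_α in which every composition-indexed Schur function s_{α̃} with a_α ≠ 0 straightens to +s_{λ(α)} for some partition λ(α) (no zero or negative straightenings), then P is Schur-positive: P = Σ_α a_α s_{λ(α)} with all coefficients equal to the a_α, provided a_α ≥ 0 for all α. -/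
open MvPolynomial Finset
open scoped Classical

/-! ### Auxiliary definitions for the proof -/

/-- Extension of `m : Fin n → ℕ` to `ℕ` by zero. -/
def mex (n : ℕ) (m : Fin n → ℕ) (u : ℕ) : ℕ := if h : u < n then m ⟨u, h⟩ else 0

/-- Prefix sums: `cum n m t = m 0 + ⋯ + m t`. -/
def cum (n : ℕ) (m : Fin n → ℕ) (t : ℕ) : ℕ := ∑ u ∈ Finset.range (t + 1), mex n m u

/-- The basic swap move on weak compositions: `(…, mᵢ, mᵢ₊₁, …) ↦ (…, mᵢ₊₁ - 1, mᵢ + 1, …)`. -/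
def swp (n : ℕ) (m : Fin n → ℕ) (i : ℕ) : Fin n → ℕ := fun t =>
  if (t : ℕ) = i then mex n m (i + 1) - 1
  else if (t : ℕ) = i + 1 then mex n m i + 1
  else m t

/-- `m` has all proper partial sums of `α` among its prefix sums. -/
def PSc (n : ℕ) (α : List ℕ) (m : Fin n → ℕ) : Prop :=
  ∀ s ∈ compSet α, ∃ t : ℕ, cum n m t = s

/-- The swap at `i` is admissible for `m`. -/
def Pm (n : ℕ) (α : List ℕ) (m : Fin n → ℕ) (i : ℕ) : Prop :=
  i + 1 < n ∧ 1 ≤ mex n m (i + 1) ∧ PSc n α (swp n m i)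

/-- Multiplicity (fiber-size) vector of `a`. -/
def fib (n : ℕ) (a : Fin n → Fin n) : Fin n → ℕ := fun t =>
  (Finset.univ.filter fun k => a k = t).card

/-- Exponent vector `δ + m`. -/
def dv (n : ℕ) (m : Fin n → ℕ) : Fin n → ℕ := fun t => (n - 1 - (t : ℕ)) + m t

/-- Generalized alternant `det ‖x_i^{v_j}‖`. -/
noncomputable def DD (n : ℕ) (v : Fin n → ℕ) : MvPolynomial (Fin n) ℚ :=
  Matrix.det (Matrix.of fun i j : Fin n => (X i : MvPolynomial (Fin n) ℚ) ^ v j)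

/-- The monotone function with multiplicity vector `m` (when `∑ m = n`). -/
def srt (n : ℕ) (m : Fin n → ℕ) : Fin n → Fin n := fun k =>
  ⟨min ((Finset.univ.filter fun t : Fin n => cum n m (t : ℕ) ≤ (k : ℕ)).card) (n - 1),
    by have := k.pos; omega⟩

/-! ### Algebraic lemmas about `Asym`, `DD`, `Vand` -/

lemma Asym_sum (n : ℕ) {β : Type*} (s : Finset β) (f : β → MvPolynomial (Fin n) ℚ) :
    Asym n (∑ b ∈ s, f b) = ∑ b ∈ s, Asym n (f b) := by
  unfold Asym
  rw [Finset.sum_comm]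
  refine Finset.sum_congr rfl fun σ _ => ?_
  rw [map_sum, Finset.smul_sum]

lemma Asym_smul (n : ℕ) (q : ℚ) (f : MvPolynomial (Fin n) ℚ) :
    Asym n (q • f) = q • Asym n f := by
  unfold Asym
  rw [Finset.smul_sum]
  refine Finset.sum_congr rfl fun σ _ => ?_
  rw [map_smul, smul_comm]

lemma Asym_mul_sym (n : ℕ) (f P : MvPolynomial (Fin n) ℚ) (hP : P.IsSymmetric) :
    Asym n (f * P) = Asym n f * P := by
  unfold Asym
  rw [Finset.sum_mul]
  refine Finset.sum_congr rfl fun σ _ => ?_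
  rw [map_mul, hP σ, smul_mul_assoc]

lemma Asym_xgam (n : ℕ) (v : Fin n → ℕ) : Asym n (xgam n v) = DD n v := by
  unfold Asym xgam DD
  rw [Matrix.det_apply]
  refine Finset.sum_congr rfl fun σ _ => ?_
  rw [Units.smul_def]
  congr 1
  rw [map_prod]
  refine Finset.prod_congr rfl fun i _ => ?_
  rw [map_pow, rename_X]
  rfl

lemma xdelta_eq_xgam (n : ℕ) : xdelta n = xgam n (fun i => n - 1 - (i : ℕ)) := rfl

lemma Vand_eq_DD (n : ℕ) : Vand n = DD n (fun j => n - 1 - (j : ℕ)) := by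
  unfold Vand DeltaG DD
  congr 1
  refine Matrix.ext fun i j => ?_
  simp

lemma Asym_xdelta (n : ℕ) : Asym n (xdelta n) = Vand n := by
  rw [xdelta_eq_xgam, Asym_xgam, Vand_eq_DD]

lemma DeltaG_eq_DD (n : ℕ) (γ : Fin n → ℕ) :
    DeltaG n γ = DD n (fun j => (n - 1 - (j : ℕ)) + γ j) := by
  unfold DeltaG DD
  congr 1
  refine Matrix.ext fun i j => ?_
  simp only [Matrix.of_apply]
  rw [add_comm (γ j)]

lemma DD_swap (n : ℕ) (v : Fin n → ℕ) {p q : Fin n} (hpq : p ≠ q) :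
    DD n (v ∘ Equiv.swap p q) = -DD n v := by
  unfold DD
  have h : (Matrix.of fun i j : Fin n => (X i : MvPolynomial (Fin n) ℚ) ^ (v ∘ Equiv.swap p q) j)
      = (Matrix.of fun i j : Fin n => (X i : MvPolynomial (Fin n) ℚ) ^ v j).submatrix
          id (Equiv.swap p q) := rfl
  rw [h, Matrix.det_permute', Equiv.Perm.sign_swap hpq]
  simp

lemma DD_zero_of_eq (n : ℕ) (v : Fin n → ℕ) {p q : Fin n} (hpq : p ≠ q) (h : v p = v q) :
    DD n v = 0 := by
  unfold DD
  exact Matrix.det_zero_of_column_eq hpq (fun k => by simp [h])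

lemma DD_inj_of_ne_zero (n : ℕ) (v : Fin n → ℕ) (h : DD n v ≠ 0) : Function.Injective v := by
  intro p q hpq
  by_contra hne
  exact h (DD_zero_of_eq n v hne hpq)

lemma Vand_ne (n : ℕ) : Vand n ≠ 0 := by
  rw [Vand_eq_DD]
  unfold DD
  intro h
  have h2 := congrArg (eval (fun i : Fin n => ((i : ℕ) : ℚ))) h
  rw [map_zero, RingHom.map_det] at h2
  set v : Fin n → ℚ := fun i => ((i : ℕ) : ℚ) with hv
  have hM : (Matrix.of fun i j : Fin n =>
        (X i : MvPolynomial (Fin n) ℚ) ^ (n - 1 - (j : ℕ))).map (eval v)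
      = (Matrix.vandermonde v).submatrix id Fin.revPerm := by
    refine Matrix.ext fun i j => ?_
    simp only [Matrix.map_apply, Matrix.of_apply, Matrix.submatrix_apply, id_eq,
      Matrix.vandermonde_apply, map_pow, eval_X]
    congr 1
    show n - 1 - (j : ℕ) = ((Fin.rev j : Fin n) : ℕ)
    rw [Fin.val_rev]
    omega
  rw [RingHom.mapMatrix_apply, hM, Matrix.det_permute'] at h2
  have hvd : (Matrix.vandermonde v).det ≠ 0 := by
    rw [Matrix.det_vandermonde_ne_zero_iff]
    intro p q hpq
    have : ((p : ℕ) : ℚ) = ((q : ℕ) : ℚ) := hpq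
    exact Fin.ext (Nat.cast_injective this)
  rcases Int.units_eq_one_or (Equiv.Perm.sign (Fin.revPerm : Equiv.Perm (Fin n))) with hs | hs <;>
    rw [hs] at h2 <;> simp at h2 <;> exact hvd h2

/-! ### Prefix-sum lemmas -/

lemma mex_lt (n : ℕ) (m : Fin n → ℕ) {u : ℕ} (h : u < n) : mex n m u = m ⟨u, h⟩ := dif_pos h

lemma mex_ge (n : ℕ) (m : Fin n → ℕ) {u : ℕ} (h : n ≤ u) : mex n m u = 0 := dif_neg (by omega)

lemma cum_succ (n : ℕ) (m : Fin n → ℕ) (t : ℕ) :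
    cum n m (t + 1) = cum n m t + mex n m (t + 1) := Finset.sum_range_succ _ _

lemma cum_zero (n : ℕ) (m : Fin n → ℕ) : cum n m 0 = mex n m 0 := by
  unfold cum; simp

lemma cum_mono (n : ℕ) (m : Fin n → ℕ) {t t' : ℕ} (h : t ≤ t') : cum n m t ≤ cum n m t' :=
  Finset.sum_le_sum_of_subset (Finset.range_subset_range.2 (by omega))

lemma cum_stable (n : ℕ) (m : Fin n → ℕ) {t : ℕ} (h : n - 1 ≤ t) :
    cum n m t = ∑ u : Fin n, m u := by
  unfold cum
  have h1 : ∑ u ∈ Finset.range n, mex n m u = ∑ u ∈ Finset.range (t + 1), mex n m u := by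
    refine Finset.sum_subset (Finset.range_subset_range.2 (by omega)) ?_
    intro x _ hx
    rw [Finset.mem_range] at hx
    exact mex_ge n m (by omega)
  rw [← h1, ← Fin.sum_univ_eq_sum_range (fun u => mex n m u) n]
  refine Finset.sum_congr rfl fun u _ => ?_
  rw [mex_lt n m u.isLt]

lemma cum_le_total (n : ℕ) (m : Fin n → ℕ) (t : ℕ) : cum n m t ≤ ∑ u : Fin n, m u := by
  calc cum n m t ≤ cum n m (max t (n - 1)) := cum_mono n m (le_max_left _ _)
  _ = ∑ u : Fin n, m u := cum_stable n m (le_max_right _ _)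

lemma cum_ext (n : ℕ) {m m' : Fin n → ℕ} (h : ∀ t : ℕ, cum n m t = cum n m' t) : m = m' := by
  funext u
  have hu := u.isLt
  have h2 : ∀ w : ℕ, mex n m w = mex n m' w := by
    intro w
    cases w with
    | zero => rw [← cum_zero, ← cum_zero, h]
    | succ p =>
      have e1 := cum_succ n m p
      have e2 := cum_succ n m' p
      have := h (p + 1)
      have := h p
      omega
  have := h2 (u : ℕ)
  rw [mex_lt n m hu, mex_lt n m' hu] at this
  simpa using this

/-! ### Swap lemmas -/

lemma mex_swp (n : ℕ) (m : Fin n → ℕ) {i : ℕ} (hi : i + 1 < n) (u : ℕ) :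
    mex n (swp n m i) u =
      if u = i then mex n m (i + 1) - 1
      else if u = i + 1 then mex n m i + 1
      else mex n m u := by
  by_cases h : u < n
  · rw [mex_lt n _ h]
    unfold swp
    rw [mex_lt n m h]
  · have h1 : u ≠ i := by omega
    have h2 : u ≠ i + 1 := by omega
    rw [if_neg h1, if_neg h2, mex_ge n _ (by omega), mex_ge n m (by omega)]

lemma cum_swp_lt (n : ℕ) (m : Fin n → ℕ) {i : ℕ} (hi : i + 1 < n) {t : ℕ} (ht : t < i) :
    cum n (swp n m i) t = cum n m t := by
  refine Finset.sum_congr rfl fun u hu => ?_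
  rw [Finset.mem_range] at hu
  rw [mex_swp n m hi u, if_neg (by omega), if_neg (by omega)]

lemma cum_swp_i (n : ℕ) (m : Fin n → ℕ) {i : ℕ} (hi : i + 1 < n)
    (h1 : 1 ≤ mex n m (i + 1)) :
    cum n (swp n m i) i + (mex n m i + 1) = cum n m (i + 1) := by
  have e1 : cum n (swp n m i) i = (∑ u ∈ Finset.range i, mex n m u) + (mex n m (i + 1) - 1) := by
    unfold cum
    rw [Finset.sum_range_succ]
    congr 1
    · refine Finset.sum_congr rfl fun u hu => ?_
      rw [Finset.mem_range] at hu
      rw [mex_swp n m hi u, if_neg (by omega), if_neg (by omega)]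
    · rw [mex_swp n m hi i, if_pos rfl]
  have e2 : cum n m (i + 1) = (∑ u ∈ Finset.range i, mex n m u) + mex n m i + mex n m (i + 1) := by
    unfold cum
    rw [Finset.sum_range_succ, Finset.sum_range_succ]
  omega

lemma cum_swp_gt (n : ℕ) (m : Fin n → ℕ) {i : ℕ} (hi : i + 1 < n)
    (h1 : 1 ≤ mex n m (i + 1)) {t : ℕ} (ht : i + 1 ≤ t) :
    cum n (swp n m i) t = cum n m t := by
  induction t, ht using Nat.le_induction with
  | base =>
    have e1 := cum_swp_i n m hi h1
    have e2 := cum_succ n (swp n m i) i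
    have e3 : mex n (swp n m i) (i + 1) = mex n m i + 1 := by
      rw [mex_swp n m hi, if_neg (by omega), if_pos rfl]
    omega
  | succ t ht ih =>
    rw [cum_succ, cum_succ, ih, mex_swp n m hi, if_neg (by omega), if_neg (by omega)]

lemma cum_swp_ne (n : ℕ) (m : Fin n → ℕ) {i : ℕ} (hi : i + 1 < n)
    (h1 : 1 ≤ mex n m (i + 1)) {t : ℕ} (ht : t ≠ i) :
    cum n (swp n m i) t = cum n m t := by
  rcases lt_or_ge t i with h | h
  · exact cum_swp_lt n m hi h
  · exact cum_swp_gt n m hi h1 (by omega)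

lemma total_swp (n : ℕ) (m : Fin n → ℕ) {i : ℕ} (hi : i + 1 < n)
    (h1 : 1 ≤ mex n m (i + 1)) :
    ∑ u : Fin n, swp n m i u = ∑ u : Fin n, m u := by
  rw [← cum_stable n _ (le_refl (n - 1)), ← cum_stable n m (le_refl (n - 1))]
  exact cum_swp_ne n m hi h1 (by omega)

lemma swp_apply (n : ℕ) (m : Fin n → ℕ) (i : ℕ) (t : Fin n) :
    swp n m i t = if (t : ℕ) = i then mex n m (i + 1) - 1
      else if (t : ℕ) = i + 1 then mex n m i + 1 else m t := rfl

lemma mex_eq_val (n : ℕ) (m : Fin n → ℕ) (t : Fin n) : mex n m (t : ℕ) = m t := by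
  rw [mex_lt n m t.isLt]

lemma swp_swp (n : ℕ) (m : Fin n → ℕ) {i : ℕ} (hi : i + 1 < n)
    (h1 : 1 ≤ mex n m (i + 1)) :
    swp n (swp n m i) i = m := by
  funext t
  have hvi : mex n m (t : ℕ) = m t := mex_eq_val n m t
  rw [swp_apply n (swp n m i) i t, mex_swp n m hi, mex_swp n m hi, swp_apply n m i t]
  by_cases h : (t : ℕ) = i
  · rw [h] at hvi
    split_ifs <;> omega
  · by_cases h2 : (t : ℕ) = i + 1
    · rw [h2] at hvi
      split_ifs <;> omega
    · split_ifs <;> omega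

/-! ### Fibers, monotone functions, and sorting -/

lemma total_fib (n : ℕ) (a : Fin n → Fin n) : ∑ t : Fin n, fib n a t = n := by
  unfold fib
  rw [← Finset.card_eq_sum_card_fiberwise (fun k _ => Finset.mem_univ (a k))]
  simp

lemma cum_fib (n : ℕ) (a : Fin n → Fin n) (t : ℕ) :
    cum n (fib n a) t = (Finset.univ.filter fun k => (a k : ℕ) ≤ t).card := by
  have hmaps : ∀ k ∈ (Finset.univ.filter fun k => (a k : ℕ) ≤ t), (a k : ℕ) ∈ Finset.range (t+1) := by
    intro k hk
    rw [Finset.mem_filter] at hk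
    rw [Finset.mem_range]
    omega
  rw [Finset.card_eq_sum_card_fiberwise hmaps]
  unfold cum
  refine Finset.sum_congr rfl fun u hu => ?_
  rw [Finset.mem_range] at hu
  by_cases h : u < n
  · rw [mex_lt n _ h]
    unfold fib
    congr 1
    ext k
    simp only [Finset.mem_filter, Finset.mem_univ, true_and, Fin.ext_iff]
    omega
  · rw [mex_ge n _ (by omega)]
    symm
    rw [Finset.card_eq_zero]
    ext k
    simp only [Finset.mem_filter, Finset.notMem_empty, iff_false, not_and, Finset.mem_univ,
      true_implies, and_imp]
    intro _ hk
    have := (a k).isLt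
    omega

lemma card_filter_val_lt (n c : ℕ) (hc : c ≤ n) :
    (Finset.univ.filter fun k : Fin n => (k : ℕ) < c).card = c := by
  rw [Finset.card_filter, Fin.sum_univ_eq_sum_range (fun u => if u < c then 1 else 0) n,
    ← Finset.card_filter]
  have h : (Finset.range n).filter (fun u => u < c) = Finset.range c := by
    ext u
    simp only [Finset.mem_filter, Finset.mem_range]
    omega
  rw [h, Finset.card_range]

lemma downclosed_mem_iff {n : ℕ} (B : Finset (Fin n))
    (hB : ∀ k k' : Fin n, k' ≤ k → k ∈ B → k' ∈ B) (k : Fin n) :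
    k ∈ B ↔ (k : ℕ) < B.card := by
  constructor
  · intro hk
    have hsub : (Finset.univ.filter fun k' : Fin n => (k' : ℕ) < (k : ℕ) + 1) ⊆ B := by
      intro k' hk'
      rw [Finset.mem_filter] at hk'
      exact hB k k' (by rw [Fin.le_def]; omega) hk
    have := Finset.card_le_card hsub
    rw [card_filter_val_lt n _ (by have := k.isLt; omega)] at this
    omega
  · intro hk
    by_contra hnk
    have hsub : B ⊆ Finset.univ.filter fun k' : Fin n => (k' : ℕ) < (k : ℕ) := by
      intro b hb
      rw [Finset.mem_filter]
      refine ⟨Finset.mem_univ _, ?_⟩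
      by_contra hbk
      exact hnk (hB b k (by rw [Fin.le_def]; omega) hb)
    have := Finset.card_le_card hsub
    rw [card_filter_val_lt n _ (by have := k.isLt; omega)] at this
    omega

lemma mono_le_iff {n : ℕ} {a : Fin n → Fin n} (ha : Monotone a) (k : Fin n) (t : ℕ) :
    (a k : ℕ) ≤ t ↔ (k : ℕ) < cum n (fib n a) t := by
  rw [cum_fib]
  have hd : ∀ p p' : Fin n, p' ≤ p →
      p ∈ (Finset.univ.filter fun q : Fin n => (a q : ℕ) ≤ t) →
      p' ∈ (Finset.univ.filter fun q : Fin n => (a q : ℕ) ≤ t) := by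
    intro p p' hp hpB
    rw [Finset.mem_filter] at hpB ⊢
    refine ⟨Finset.mem_univ _, ?_⟩
    have h2 : a p' ≤ a p := ha hp
    rw [Fin.le_def] at h2
    omega
  have h3 := downclosed_mem_iff _ hd k
  simp only [Finset.mem_filter, Finset.mem_univ, true_and] at h3
  exact h3

lemma mono_fib_inj {n : ℕ} {a b : Fin n → Fin n} (ha : Monotone a) (hb : Monotone b)
    (h : fib n a = fib n b) : a = b := by
  funext k
  have h1 : ∀ t : ℕ, ((a k : ℕ) ≤ t ↔ (b k : ℕ) ≤ t) := by
    intro t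
    rw [mono_le_iff ha, mono_le_iff hb, h]
  have h2 := (h1 (b k)).2 le_rfl
  have h3 := (h1 (a k)).1 le_rfl
  exact Fin.ext (by omega)

lemma srt_val {n : ℕ} (m : Fin n → ℕ) (htot : ∑ u : Fin n, m u = n) (k : Fin n) :
    (srt n m k : ℕ) = (Finset.univ.filter fun t : Fin n => cum n m (t : ℕ) ≤ (k : ℕ)).card := by
  unfold srt
  simp only
  have hpos : 0 < n := k.pos
  have hlast : (⟨n - 1, by omega⟩ : Fin n) ∉
      (Finset.univ.filter fun t : Fin n => cum n m (t : ℕ) ≤ (k : ℕ)) := by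
    simp only [Finset.mem_filter, Finset.mem_univ, true_and, not_le]
    rw [cum_stable n m (le_refl _), htot]
    exact k.isLt
  have hne : (Finset.univ.filter fun t : Fin n => cum n m (t : ℕ) ≤ (k : ℕ)) ≠ Finset.univ := by
    intro he
    exact hlast (he.symm ▸ Finset.mem_univ _)
  have h4 := Finset.card_lt_card (Finset.ssubset_univ_iff.2 hne)
  rw [Finset.card_univ, Fintype.card_fin] at h4
  omega

lemma srt_le_iff {n : ℕ} (m : Fin n → ℕ) (htot : ∑ u : Fin n, m u = n) (k t : Fin n) :
    (srt n m k : ℕ) ≤ (t : ℕ) ↔ (k : ℕ) < cum n m (t : ℕ) := by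
  have hd : ∀ p p' : Fin n, p' ≤ p →
      p ∈ (Finset.univ.filter fun t : Fin n => cum n m (t : ℕ) ≤ (k : ℕ)) →
      p' ∈ (Finset.univ.filter fun t : Fin n => cum n m (t : ℕ) ≤ (k : ℕ)) := by
    intro p p' hp hpB
    rw [Finset.mem_filter] at hpB ⊢
    refine ⟨Finset.mem_univ _, ?_⟩
    exact le_trans (cum_mono n m (by rw [Fin.le_def] at hp; omega)) hpB.2
  have h3 := downclosed_mem_iff _ hd t
  simp only [Finset.mem_filter, Finset.mem_univ, true_and] at h3
  rw [← srt_val m htot k] at h3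
  constructor
  · intro h
    by_contra hc
    have := h3.2 (by omega)
    omega
  · intro h
    by_contra hc
    have := h3.1 (by omega)
    omega

lemma srt_mono {n : ℕ} (m : Fin n → ℕ) : Monotone (srt n m) := by
  intro k k' hk
  rw [Fin.le_def]
  unfold srt
  simp only
  have hsub : (Finset.univ.filter fun t : Fin n => cum n m (t : ℕ) ≤ (k : ℕ)) ⊆
      (Finset.univ.filter fun t : Fin n => cum n m (t : ℕ) ≤ (k' : ℕ)) := by
    intro t ht
    rw [Finset.mem_filter] at ht ⊢
    exact ⟨Finset.mem_univ _, le_trans ht.2 (by rw [Fin.le_def] at hk; omega)⟩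
  have := Finset.card_le_card hsub
  omega

lemma fib_srt {n : ℕ} (m : Fin n → ℕ) (htot : ∑ u : Fin n, m u = n) :
    fib n (srt n m) = m := by
  apply cum_ext n
  intro t
  by_cases h : t < n
  · rw [cum_fib]
    have hch : ∀ k : Fin n, ((srt n m k : ℕ) ≤ t ↔ (k : ℕ) < cum n m t) := by
      intro k
      exact srt_le_iff m htot k ⟨t, h⟩
    have : (Finset.univ.filter fun k : Fin n => (srt n m k : ℕ) ≤ t) =
        (Finset.univ.filter fun k : Fin n => (k : ℕ) < cum n m t) := by
      ext k
      simp only [Finset.mem_filter, Finset.mem_univ, true_and]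
      exact hch k
    rw [this]
    exact card_filter_val_lt n _ (le_trans (cum_le_total n m t) (le_of_eq htot))
  · rw [cum_stable n _ (by omega), cum_stable n m (by omega), total_fib, htot]

lemma srt_fib {n : ℕ} {a : Fin n → Fin n} (ha : Monotone a) : srt n (fib n a) = a := by
  funext k
  have htot := total_fib n a
  apply Fin.ext
  have h1 : (srt n (fib n a) k : ℕ) ≤ (a k : ℕ) := by
    rw [srt_le_iff _ htot k (a k), ← mono_le_iff ha]
  have h2 : (a k : ℕ) ≤ (srt n (fib n a) k : ℕ) := by
    rw [mono_le_iff ha k, ← srt_le_iff _ htot k (srt n (fib n a) k)]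
  omega

/-! ### Lists, compositions, `pad`, `compSet` -/

lemma sum_take_eq (α : List ℕ) : ∀ t : ℕ, (α.take t).sum = ∑ u ∈ Finset.range t, α.getD u 0 := by
  induction α with
  | nil => intro t; simp
  | cons x xs ih =>
    intro t
    cases t with
    | zero => simp
    | succ p =>
      rw [List.take_succ_cons, List.sum_cons, Finset.sum_range_succ', ih p]
      simp [List.getD]
      omega

lemma length_le_sum_s14 {α : List ℕ} (h : ∀ x ∈ α, 0 < x) : α.length ≤ α.sum := by
  induction α with
  | nil => simp
  | cons x xs ih =>
    simp only [List.length_cons, List.sum_cons]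
    have h1 : 0 < x := h x (by simp)
    have h2 := ih (fun y hy => h y (by simp [hy]))
    omega

lemma sum_take_mono (α : List ℕ) {p q : ℕ} (h : p ≤ q) : (α.take p).sum ≤ (α.take q).sum := by
  rw [sum_take_eq, sum_take_eq]
  exact Finset.sum_le_sum_of_subset (Finset.range_subset_range.2 h)

lemma sum_take_strict {α : List ℕ} (hpos : ∀ x ∈ α, 0 < x) {p q : ℕ} (hpq : p < q)
    (hq : q ≤ α.length) : (α.take p).sum < (α.take q).sum := by
  have h1 : (α.take (p + 1)).sum ≤ (α.take q).sum := sum_take_mono α (by omega)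
  have h2 : (α.take p).sum < (α.take (p + 1)).sum := by
    rw [sum_take_eq, sum_take_eq, Finset.sum_range_succ]
    have hp : p < α.length := by omega
    have h3 : α.getD p 0 = α[p] := List.getD_eq_getElem α 0 hp
    have h4 : 0 < α[p] := hpos _ (List.getElem_mem hp)
    omega
  omega

lemma sum_take_length (α : List ℕ) {t : ℕ} (h : α.length ≤ t) : (α.take t).sum = α.sum := by
  rw [List.take_of_length_le h]

lemma mem_compSet_bounds {n : ℕ} {α : List ℕ} (hα : IsComposition n α) {s : ℕ}
    (hs : s ∈ compSet α) : 0 < s ∧ s < n := by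
  obtain ⟨j, hj0, hjl, hjs⟩ := hs
  constructor
  · have := sum_take_strict hα.2 hj0 (le_of_lt hjl)
    simpa [hjs] using this
  · have h1 := sum_take_strict hα.2 hjl (le_refl α.length)
    rw [sum_take_length α (le_refl _), hα.1, hjs] at h1
    exact h1

lemma mex_pad (n : ℕ) (α : List ℕ) (hlen : α.length ≤ n) (u : ℕ) :
    mex n (pad n α) u = α.getD u 0 := by
  by_cases h : u < n
  · rw [mex_lt n _ h]; rfl
  · rw [mex_ge n _ (by omega)]
    rw [List.getD_eq_default]
    omega

lemma cum_pad (n : ℕ) (α : List ℕ) (hlen : α.length ≤ n) (t : ℕ) :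
    cum n (pad n α) t = (α.take (t + 1)).sum := by
  rw [sum_take_eq]
  exact Finset.sum_congr rfl fun u _ => mex_pad n α hlen u

lemma total_pad (n : ℕ) (α : List ℕ) (hlen : α.length ≤ n) :
    ∑ u : Fin n, pad n α u = α.sum := by
  rcases Nat.eq_zero_or_pos n with h0 | h0
  · subst h0
    have : α = [] := List.length_eq_zero_iff.1 (by omega)
    subst this
    simp
  · rw [← cum_stable n _ (le_refl (n - 1)), cum_pad n α hlen, sum_take_length]
    omega

lemma PSc_pad (n : ℕ) (α : List ℕ) (hlen : α.length ≤ n) : PSc n α (pad n α) := by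
  intro s hs
  obtain ⟨j, hj0, hjl, hjs⟩ := hs
  exact ⟨j - 1, by rw [cum_pad n α hlen]; rw [show j - 1 + 1 = j by omega]; exact hjs⟩

/-! ### Translation of `FCond` -/

lemma fcond_iff {n : ℕ} {α : List ℕ} (hα : IsComposition n α) (a : Fin n → Fin n) :
    FCond n n α a ↔ (Monotone a ∧ PSc n α (fib n a)) := by
  constructor
  · rintro ⟨hmono, hcond⟩
    refine ⟨hmono, ?_⟩
    intro s hs
    obtain ⟨hs0, hsn⟩ := mem_compSet_bounds hα hs
    set i : Fin n := ⟨s - 1, by omega⟩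
    set j : Fin n := ⟨s, hsn⟩
    have hij : a i < a j := hcond i j (by simp only [i, j]; omega)
      (by simp only [i]; rw [show s - 1 + 1 = s by omega]; exact hs)
    refine ⟨(a i : ℕ), ?_⟩
    rw [cum_fib]
    have hset : (Finset.univ.filter fun k : Fin n => (a k : ℕ) ≤ (a i : ℕ)) =
        (Finset.univ.filter fun k : Fin n => (k : ℕ) < s) := by
      ext k
      simp only [Finset.mem_filter, Finset.mem_univ, true_and]
      constructor
      · intro hk
        by_contra hc
        have hjk : j ≤ k := by rw [Fin.le_def]; simp only [j]; omega
        have := hmono hjk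
        rw [Fin.le_def] at this
        rw [Fin.lt_def] at hij
        omega
      · intro hk
        have hki : k ≤ i := by rw [Fin.le_def]; simp only [i]; omega
        have := hmono hki
        rw [Fin.le_def] at this
        omega
    rw [hset, card_filter_val_lt n s (by omega)]
  · rintro ⟨hmono, hps⟩
    refine ⟨hmono, ?_⟩
    intro i j hij hs
    obtain ⟨t, ht⟩ := hps _ hs
    have h1 : (a i : ℕ) ≤ t := by
      rw [mono_le_iff hmono, ht]
      omega
    have h2 : ¬ (a j : ℕ) ≤ t := by
      rw [mono_le_iff hmono, ht]
      omega
    rw [Fin.lt_def]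
    omega

/-! ### The swap-admissibility claims -/

lemma Pm_swp {n : ℕ} {α : List ℕ} {m : Fin n → ℕ} {i : ℕ} (hm : PSc n α m)
    (hi : Pm n α m i) : Pm n α (swp n m i) i := by
  obtain ⟨h1, h2, h3⟩ := hi
  refine ⟨h1, ?_, ?_⟩
  · rw [mex_swp n m h1, if_neg (by omega), if_pos rfl]
    omega
  · rw [swp_swp n m h1 h2]
    exact hm

lemma claimB {n : ℕ} {α : List ℕ} {m : Fin n → ℕ} (hm : PSc n α m)
    (hinj : Function.Injective (dv n m)) {i j : ℕ} (hij : i < j)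
    (hPi : Pm n α m i) (hPj : Pm n α (swp n m i) j) : Pm n α m j := by
  obtain ⟨hi1, hi2, hi3⟩ := hPi
  obtain ⟨hj1, hj2, hj3⟩ := hPj
  rcases Nat.lt_or_ge (i + 1) j with hcase | hcase
  · -- j ≥ i + 2
    have hj2' : 1 ≤ mex n m (j + 1) := by
      rw [mex_swp n m hi1, if_neg (by omega), if_neg (by omega)] at hj2
      exact hj2
    refine ⟨hj1, hj2', ?_⟩
    intro s hs
    obtain ⟨t, ht⟩ := hj3 s hs
    by_cases hti : t = i
    · rw [hti] at ht
      have e1 : cum n (swp n (swp n m i) j) i = cum n (swp n m i) i :=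
        cum_swp_ne n (swp n m i) hj1 hj2 (by omega)
      have e2 := cum_swp_i n m hi1 hi2
      obtain ⟨t', ht'⟩ := hm s hs
      have htj : t' ≠ j := by
        intro h
        have h4 : cum n m j = s := by rw [← h]; exact ht'
        have h5 := cum_mono n m (show i + 1 ≤ j by omega)
        omega
      exact ⟨t', by rw [cum_swp_ne n m hj1 hj2' htj]; exact ht'⟩
    · by_cases htj : t = j
      · rw [htj] at ht
        have e1 := cum_swp_i n (swp n m i) hj1 hj2
        have e2 := cum_swp_i n m hj1 hj2'
        have e3 : mex n (swp n m i) j = mex n m j := by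
          rw [mex_swp n m hi1, if_neg (by omega), if_neg (by omega)]
        have e4 : cum n (swp n m i) (j + 1) = cum n m (j + 1) :=
          cum_swp_ne n m hi1 hi2 (by omega)
        exact ⟨j, by omega⟩
      · have e1 : cum n (swp n (swp n m i) j) t = cum n (swp n m i) t :=
          cum_swp_ne n (swp n m i) hj1 hj2 htj
        have e2 : cum n (swp n m i) t = cum n m t := cum_swp_ne n m hi1 hi2 hti
        exact ⟨t, by rw [cum_swp_ne n m hj1 hj2' htj]; omega⟩
  · -- j = i + 1
    have hj' : j = i + 1 := by omega
    subst hj'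
    rw [show i + 1 + 1 = i + 2 by omega] at hj1 hj2
    have hj2' : 1 ≤ mex n m (i + 2) := by
      rw [mex_swp n m hi1, if_neg (by omega), if_neg (by omega)] at hj2
      exact hj2
    refine ⟨by omega, by rw [show i + 1 + 1 = i + 2 by omega]; exact hj2', ?_⟩
    intro s hs
    obtain ⟨t, ht⟩ := hj3 s hs
    by_cases hti : t = i
    · rw [hti] at ht
      have e1 : cum n (swp n (swp n m i) (i + 1)) i = cum n (swp n m i) i :=
        cum_swp_ne n (swp n m i) hj1 hj2 (by omega)
      have e2 := cum_swp_i n m hi1 hi2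
      obtain ⟨t', ht'⟩ := hm s hs
      have htj : t' ≠ i + 1 := by
        intro h
        have h4 : cum n m (i + 1) = s := by rw [← h]; exact ht'
        omega
      exact ⟨t', by rw [cum_swp_ne n m hj1 hj2' htj]; exact ht'⟩
    · by_cases htj : t = i + 1
      · rw [htj] at ht
        have e1 := cum_swp_i n (swp n m i) hj1 hj2
        rw [show i + 1 + 1 = i + 2 by omega] at e1
        have e3 : mex n (swp n m i) (i + 1) = mex n m i + 1 := by
          rw [mex_swp n m hi1, if_neg (by omega), if_pos rfl]
        have e4 : cum n (swp n m i) (i + 2) = cum n m (i + 2) :=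
          cum_swp_ne n m hi1 hi2 (by omega)
        obtain ⟨t', ht'⟩ := hm s hs
        have htj' : t' ≠ i + 1 := by
          intro h
          have h4 : cum n m (i + 1) = s := by rw [← h]; exact ht'
          have e5 := cum_succ n m (i + 1)
          rw [show i + 1 + 1 = i + 2 by omega] at e5
          have e6 : mex n m (i + 2) = mex n m i + 2 := by omega
          have hL : i < n := by omega
          have hL2 : i + 2 < n := by omega
          have hv1 : dv n m ⟨i, hL⟩ = (n - 1 - i) + mex n m i := by
            unfold dv
            rw [mex_lt n m hL]
          have hv2 : dv n m ⟨i + 2, hL2⟩ = (n - 1 - (i + 2)) + mex n m (i + 2) := by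
            unfold dv
            rw [mex_lt n m hL2]
          have hp : dv n m ⟨i, hL⟩ = dv n m ⟨i + 2, hL2⟩ := by
            rw [hv1, hv2]
            omega
          have h7 := hinj hp
          rw [Fin.mk.injEq] at h7
          omega
        exact ⟨t', by rw [cum_swp_ne n m hj1 hj2' htj']; exact ht'⟩
      · have e1 : cum n (swp n (swp n m i) (i + 1)) t = cum n (swp n m i) t :=
          cum_swp_ne n (swp n m i) hj1 hj2 htj
        have e2 : cum n (swp n m i) t = cum n m t := cum_swp_ne n m hi1 hi2 hti
        exact ⟨t, by rw [cum_swp_ne n m hj1 hj2' htj]; omega⟩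

lemma claimC {n : ℕ} {α : List ℕ} {m : Fin n → ℕ} {i : ℕ} (hα : IsComposition n α)
    (hlen : α.length ≤ n) (hm : PSc n α m) (hi1 : i + 1 < n) (hi2 : 1 ≤ mex n m (i + 1))
    (heq : swp n m i = pad n α) : m = pad n α := by
  have hp1 : α.getD (i + 1) 0 = mex n m i + 1 := by
    have hv := congrFun heq ⟨i + 1, hi1⟩
    rw [swp_apply] at hv
    simp only [if_neg (show ¬ (i + 1 : ℕ) = i by omega), if_pos rfl] at hv
    exact hv.symm
  have hlen2 : i + 1 < α.length := by
    by_contra hc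
    rw [List.getD_eq_default α 0 (by omega)] at hp1
    omega
  have hsS : (α.take (i + 1)).sum ∈ compSet α := ⟨i + 1, by omega, hlen2, rfl⟩
  obtain ⟨t0, ht0⟩ := hm _ hsS
  have hcum_ne : ∀ t : ℕ, t ≠ i → cum n m t = (α.take (t + 1)).sum := by
    intro t htne
    rw [← cum_pad n α hlen, ← heq, cum_swp_ne n m hi1 hi2 htne]
  by_cases ht0i : t0 = i
  · rw [ht0i] at ht0
    have e2 := cum_swp_i n m hi1 hi2
    have e3 : cum n (swp n m i) i = (α.take (i + 1)).sum := by
      rw [heq, cum_pad n α hlen]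
    have e4 := cum_succ n m i
    have e5 : mex n m (i + 1) = mex n m i + 1 := by omega
    funext t
    have hv := congrFun heq t
    rw [swp_apply] at hv
    by_cases h : (t : ℕ) = i
    · rw [if_pos h] at hv
      have h6 : mex n m i = m t := by rw [← h, mex_eq_val]
      omega
    · rw [if_neg h] at hv
      by_cases h2 : (t : ℕ) = i + 1
      · rw [if_pos h2] at hv
        have h6 : mex n m (i + 1) = m t := by rw [← h2, mex_eq_val]
        omega
      · rw [if_neg h2] at hv
        exact hv
  · exfalso
    have e1 : cum n m t0 = (α.take (t0 + 1)).sum := hcum_ne t0 ht0i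
    rcases Nat.lt_or_ge t0 i with hlt | hgt
    · have := sum_take_strict hα.2 (show t0 + 1 < i + 1 by omega) (by omega)
      omega
    · have hgt' : i < t0 := by omega
      by_cases hc : t0 + 1 ≤ α.length
      · have := sum_take_strict hα.2 (show i + 1 < t0 + 1 by omega) hc
        omega
      · have e2 : (α.take (t0 + 1)).sum = α.sum := sum_take_length α (by omega)
        have e3 := sum_take_strict hα.2 hlen2 (le_refl α.length)
        rw [sum_take_length α (le_refl _)] at e3
        omega

lemma claimA {n : ℕ} {α : List ℕ} (hα : IsComposition n α) {m : Fin n → ℕ}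
    (htot : ∑ u : Fin n, m u = n) (hm : PSc n α m)
    (hnone : ∀ i, ¬ Pm n α m i) : m = pad n α := by
  have hlen : α.length ≤ n := by
    have h1 := length_le_sum_s14 hα.2
    have h2 := hα.1
    omega
  rcases Nat.eq_zero_or_pos n with hn0 | hn0
  · subst hn0
    funext t
    exact t.elim0
  have step1 : ∀ i : ℕ, i + 1 < n → 1 ≤ mex n m (i + 1) →
      (cum n m i ∈ compSet α ∧ ∀ t : ℕ, t ≠ i → cum n m t ≠ cum n m i) := by
    intro i hin h1
    have hnPS : ¬ PSc n α (swp n m i) := fun hps => hnone i ⟨hin, h1, hps⟩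
    rw [PSc] at hnPS
    push_neg at hnPS
    obtain ⟨s, hsS, hsnone⟩ := hnPS
    obtain ⟨t0, ht0⟩ := hm s hsS
    have ht0i : t0 = i := by
      by_contra hc
      exact hsnone t0 (by rw [cum_swp_ne n m hin h1 hc]; exact ht0)
    subst ht0i
    rw [ht0]
    refine ⟨hsS, ?_⟩
    intro t htne hteq
    exact hsnone t (by rw [cum_swp_ne n m hin h1 htne]; omega)
  have hdown : ∀ i : ℕ, i + 1 < n → 1 ≤ mex n m (i + 1) → 1 ≤ mex n m i := by
    intro i hin h1
    obtain ⟨hS, huniq⟩ := step1 i hin h1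
    by_contra hc
    push_neg at hc
    cases i with
    | zero =>
      have h0 := (mem_compSet_bounds hα hS).1
      have hz := cum_zero n m
      omega
    | succ p =>
      have hsucc := cum_succ n m p
      exact huniq p (by omega) (by omega)
  have hdc : ∀ j : ℕ, 1 ≤ mex n m j → ∀ u : ℕ, u ≤ j → 1 ≤ mex n m u := by
    intro j
    induction j with
    | zero =>
      intro h u hu
      have : u = 0 := by omega
      subst this
      exact h
    | succ p ih =>
      intro h u hu
      have hpn : p + 1 < n := by
        by_contra hc
        rw [mex_ge n m (by omega)] at h
        omega
      have hp := hdown p hpn h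
      rcases Nat.lt_or_ge u (p + 1) with h2 | h2
      · exact ih hp u (by omega)
      · have h3 : u = p + 1 := by omega
        subst h3
        exact h
  have hexD : ∃ u, u ≤ n - 1 ∧ 1 ≤ mex n m u := by
    by_contra hc
    push_neg at hc
    have hz : ∀ u : Fin n, m u = 0 := by
      intro u
      have h5 := hc (u : ℕ) (by have := u.isLt; omega)
      rw [mex_eq_val] at h5
      omega
    rw [Finset.sum_congr rfl (fun u _ => hz u)] at htot
    simp at htot
    omega
  obtain ⟨u0, hu0n, hu0D⟩ := hexD
  set r := Nat.findGreatest (fun u => 1 ≤ mex n m u) (n - 1) with hr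
  have hrD : 1 ≤ mex n m r := Nat.findGreatest_spec (P := fun u => 1 ≤ mex n m u) hu0n hu0D
  have hrn : r ≤ n - 1 := Nat.findGreatest_le _
  have hrmax : ∀ u, r < u → mex n m u = 0 := by
    intro u hu
    by_cases hun : u ≤ n - 1
    · have := Nat.findGreatest_is_greatest (P := fun u => 1 ≤ mex n m u) hu hun
      omega
    · exact mex_ge n m (by omega)
  have hcum_hi : ∀ t, r ≤ t → cum n m t = cum n m r := by
    intro t ht
    induction t, ht using Nat.le_induction with
    | base => rfl
    | succ t ht ih =>
      rw [cum_succ, ih]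
      have := hrmax (t + 1) (by omega)
      omega
  have hcumr : cum n m r = n := by
    have h5 := hcum_hi (max r (n - 1)) (le_max_left _ _)
    rw [cum_stable n m (le_max_right _ _), htot] at h5
    omega
  have hstrict : ∀ t, t < r → cum n m t < cum n m (t + 1) := by
    intro t ht
    have hDt : 1 ≤ mex n m (t + 1) := hdc r hrD (t + 1) (by omega)
    have := cum_succ n m t
    omega
  have hsub : ∀ i : ℕ, i < r → i + 1 < α.length ∧ cum n m i = (α.take (i + 1)).sum := by
    intro i
    induction i using Nat.strong_induction_on with
    | _ i ih =>
      intro hir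
      have hin : i + 1 < n := by omega
      have hDi1 : 1 ≤ mex n m (i + 1) := hdc r hrD (i + 1) (by omega)
      obtain ⟨hS, huniq⟩ := step1 i hin hDi1
      obtain ⟨j, hj0, hjl, hjs⟩ := hS
      have hj_ge : i + 1 ≤ j := by
        rcases Nat.eq_zero_or_pos i with hi0 | hi0
        · omega
        · have ihh := ih (i - 1) (by omega) (by omega)
          have hst := hstrict (i - 1) (by omega)
          rw [show i - 1 + 1 = i by omega] at hst ihh
          by_contra hc
          have := sum_take_mono α (show j ≤ i by omega)
          omega
      have hj_le : j ≤ i + 1 := by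
        by_contra hc
        have hsS' : (α.take (i + 1)).sum ∈ compSet α := ⟨i + 1, by omega, by omega, rfl⟩
        obtain ⟨t0, ht0⟩ := hm _ hsS'
        have hlt1 : (α.take (i + 1)).sum < (α.take j).sum :=
          sum_take_strict hα.2 (by omega) (by omega)
        rcases Nat.eq_zero_or_pos i with hi0 | hi0
        · subst hi0
          have := cum_mono n m (Nat.zero_le t0)
          omega
        · have ihh := ih (i - 1) (by omega) (by omega)
          rw [show i - 1 + 1 = i by omega] at ihh
          have hlt2 : (α.take i).sum < (α.take (i + 1)).sum :=
            sum_take_strict hα.2 (by omega) (by omega)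
          have hmono1 : i - 1 < t0 := by
            by_contra hc2
            have := cum_mono n m (show t0 ≤ i - 1 by omega)
            omega
          have hmono2 : t0 < i := by
            by_contra hc2
            have := cum_mono n m (show i ≤ t0 by omega)
            omega
          omega
      have hji : j = i + 1 := by omega
      subst hji
      exact ⟨hjl, hjs.symm⟩
  have hk : α.length = r + 1 := by
    have hk1 : 0 < α.length := by
      by_contra hc
      have hnil : α = [] := List.eq_nil_of_length_eq_zero (by omega)
      rw [hnil] at hα
      have := hα.1
      simp at this
      omega
    have hk_ge : r + 1 ≤ α.length := by
      rcases Nat.eq_zero_or_pos r with hr0 | hr0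
      · omega
      · have := (hsub (r - 1) (by omega)).1
        omega
    have hk_le : α.length ≤ r + 1 := by
      by_contra hc
      have hsS' : (α.take (r + 1)).sum ∈ compSet α := ⟨r + 1, by omega, by omega, rfl⟩
      obtain ⟨t0, ht0⟩ := hm _ hsS'
      have hlt : (α.take (r + 1)).sum < α.sum := by
        have h5 := sum_take_strict hα.2 (show r + 1 < α.length by omega) (le_refl _)
        rw [sum_take_length α (le_refl _)] at h5
        exact h5
      have hα1 := hα.1
      rcases Nat.lt_or_ge t0 r with h2 | h2
      · have hss := (hsub t0 h2).2
        have h6 : (α.take (t0 + 1)).sum < (α.take (r + 1)).sum :=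
          sum_take_strict hα.2 (by omega) (by omega)
        omega
      · have := hcum_hi t0 h2
        omega
    omega
  apply cum_ext n
  intro t
  rw [cum_pad n α hlen]
  rcases Nat.lt_or_ge t r with h2 | h2
  · exact (hsub t h2).2
  · rw [hcum_hi t h2, hcumr, sum_take_length α (by omega), hα.1]

/-! ### The involution -/

noncomputable def IG (n : ℕ) (α : List ℕ) (m : Fin n → ℕ) : ℕ :=
  Nat.findGreatest (Pm n α m) n

noncomputable def prt (n : ℕ) (α : List ℕ) (a : Fin n → Fin n) : Fin n → Fin n :=
  srt n (swp n (fib n a) (IG n α (fib n a)))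

def Good (n : ℕ) (α : List ℕ) (b a : Fin n → Fin n) : Prop :=
  Pm n α (fib n a) (IG n α (fib n a)) ∧
  IG n α (swp n (fib n a) (IG n α (fib n a))) = IG n α (fib n a) ∧
  prt n α a ≠ b

lemma dv_swp (n : ℕ) (m : Fin n → ℕ) {i : ℕ} (hi : i + 1 < n) (h1 : 1 ≤ mex n m (i + 1)) :
    dv n (swp n m i) =
      dv n m ∘ Equiv.swap (⟨i, by omega⟩ : Fin n) (⟨i + 1, hi⟩ : Fin n) := by
  funext t
  simp only [Function.comp_apply]
  by_cases hti : (t : ℕ) = i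
  · have et : t = (⟨i, by omega⟩ : Fin n) := Fin.ext hti
    rw [et, Equiv.swap_apply_left]
    unfold dv
    rw [swp_apply, if_pos rfl]
    have hm1 : m (⟨i + 1, hi⟩ : Fin n) = mex n m (i + 1) := (mex_lt n m hi).symm
    rw [hm1]
    simp only
    omega
  · by_cases hti1 : (t : ℕ) = i + 1
    · have et : t = (⟨i + 1, hi⟩ : Fin n) := Fin.ext hti1
      rw [et, Equiv.swap_apply_right]
      unfold dv
      rw [swp_apply, if_neg (show ¬(i + 1 = i) by omega), if_pos rfl]
      have hm0 : m (⟨i, by omega⟩ : Fin n) = mex n m i := (mex_lt n m (by omega)).symm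
      rw [hm0]
      simp only
      omega
    · have h2 : t ≠ (⟨i, by omega⟩ : Fin n) := fun h => hti (by rw [h])
      have h3 : t ≠ (⟨i + 1, hi⟩ : Fin n) := fun h => hti1 (by rw [h])
      rw [Equiv.swap_apply_of_ne_of_ne h2 h3]
      unfold dv
      rw [swp_apply, if_neg hti, if_neg hti1]

lemma good_of_inj {n : ℕ} {α : List ℕ} (hα : IsComposition n α) {a : Fin n → Fin n}
    (hmono : Monotone a) (hPS : PSc n α (fib n a)) (hane : a ≠ srt n (pad n α))
    (hinj : Function.Injective (dv n (fib n a))) : Good n α (srt n (pad n α)) a := by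
  have hlen : α.length ≤ n := by
    have h1 := length_le_sum_s14 hα.2
    have h2 := hα.1
    omega
  have htot : ∑ u : Fin n, fib n a u = n := total_fib n a
  have hmp : fib n a ≠ pad n α := by
    intro h
    apply hane
    rw [← srt_fib hmono, h]
  have hex : ∃ i, Pm n α (fib n a) i := by
    by_contra hc
    push_neg at hc
    exact hmp (claimA hα htot hPS hc)
  obtain ⟨i1, hi1⟩ := hex
  have hbound : ∀ j, Pm n α (fib n a) j → j ≤ n := fun j hj => by
    have := hj.1
    omega
  have hPi : Pm n α (fib n a) (IG n α (fib n a)) :=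
    Nat.findGreatest_spec (P := Pm n α (fib n a)) (hbound i1 hi1) hi1
  have hmax : ∀ j, IG n α (fib n a) < j → ¬ Pm n α (fib n a) j := by
    intro j hj hPj
    have h5 := Nat.le_findGreatest (hbound j hPj) hPj
    unfold IG at hj
    omega
  refine ⟨hPi, ?_, ?_⟩
  · have hPswp : Pm n α (swp n (fib n a) (IG n α (fib n a))) (IG n α (fib n a)) :=
      Pm_swp hPS hPi
    have hle : IG n α (fib n a) ≤ IG n α (swp n (fib n a) (IG n α (fib n a))) :=
      Nat.le_findGreatest (hbound _ hPi) hPswp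
    have hge : IG n α (swp n (fib n a) (IG n α (fib n a))) ≤ IG n α (fib n a) := by
      by_contra hc
      push_neg at hc
      have hPj : Pm n α (swp n (fib n a) (IG n α (fib n a)))
          (IG n α (swp n (fib n a) (IG n α (fib n a)))) :=
        Nat.findGreatest_spec (P := Pm n α (swp n (fib n a) (IG n α (fib n a))))
          (show IG n α (fib n a) ≤ n from Nat.findGreatest_le n) hPswp
      exact hmax _ hc (claimB hPS hinj hc hPi hPj)
    omega
  · intro hpb
    have htotswp : ∑ u : Fin n, swp n (fib n a) (IG n α (fib n a)) u = n := by
      rw [total_swp n (fib n a) hPi.1 hPi.2.1, htot]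
    have hfb : fib n (prt n α a) = swp n (fib n a) (IG n α (fib n a)) := by
      unfold prt
      exact fib_srt _ htotswp
    have htotpad : ∑ u : Fin n, pad n α u = n := by
      rw [total_pad n α hlen, hα.1]
    have hswpeq : swp n (fib n a) (IG n α (fib n a)) = pad n α := by
      rw [← hfb, hpb]
      exact fib_srt _ htotpad
    exact hmp (claimC hα hlen hPS hPi.1 hPi.2.1 hswpeq)

lemma good_partner {n : ℕ} {α : List ℕ} (hα : IsComposition n α) {a : Fin n → Fin n}
    (hmono : Monotone a) (hPS : PSc n α (fib n a)) (hane : a ≠ srt n (pad n α))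
    (hG : Good n α (srt n (pad n α)) a) :
    Monotone (prt n α a) ∧
    fib n (prt n α a) = swp n (fib n a) (IG n α (fib n a)) ∧
    Good n α (srt n (pad n α)) (prt n α a) ∧
    prt n α (prt n α a) = a := by
  obtain ⟨hPi, hcons, hne⟩ := hG
  have htot : ∑ u : Fin n, fib n a u = n := total_fib n a
  have htotswp : ∑ u : Fin n, swp n (fib n a) (IG n α (fib n a)) u = n := by
    rw [total_swp n (fib n a) hPi.1 hPi.2.1, htot]
  have hfb : fib n (prt n α a) = swp n (fib n a) (IG n α (fib n a)) := by
    unfold prt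
    exact fib_srt _ htotswp
  have hmb : Monotone (prt n α a) := srt_mono _
  have hswpswp : swp n (swp n (fib n a) (IG n α (fib n a))) (IG n α (fib n a)) = fib n a :=
    swp_swp n (fib n a) hPi.1 hPi.2.1
  have hPb : Pm n α (fib n (prt n α a)) (IG n α (fib n (prt n α a))) := by
    rw [hfb, hcons]
    exact Pm_swp hPS hPi
  have hprtb : prt n α (prt n α a) = a := by
    have he : prt n α (prt n α a) =
        srt n (swp n (fib n (prt n α a)) (IG n α (fib n (prt n α a)))) := rfl
    rw [he, hfb, hcons, hswpswp]
    exact srt_fib hmono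
  refine ⟨hmb, hfb, ⟨hPb, ?_, ?_⟩, hprtb⟩
  · rw [hfb, hcons, hswpswp]
  · rw [hprtb]
    exact hane

/-! ### The core cancellation lemma -/

set_option maxHeartbeats 2000000 in
lemma coreLemma (n : ℕ) (α : List ℕ) (hα : IsComposition n α) :
    ∑ a ∈ Finset.univ.filter (fun a : Fin n → Fin n => FCond n n α a), DD n (dv n (fib n a))
      = DD n (dv n (pad n α)) := by
  have hlen : α.length ≤ n := by
    have h1 := length_le_sum_s14 hα.2
    have h2 := hα.1
    omega
  have htotpad : ∑ u : Fin n, pad n α u = n := by rw [total_pad n α hlen, hα.1]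
  have hfibstar : fib n (srt n (pad n α)) = pad n α := fib_srt _ htotpad
  have hstar_mem : srt n (pad n α) ∈ Finset.univ.filter (fun a => FCond n n α a) := by
    rw [Finset.mem_filter]
    refine ⟨Finset.mem_univ _, (fcond_iff hα _).2 ⟨srt_mono _, ?_⟩⟩
    rw [hfibstar]
    exact PSc_pad n α hlen
  rw [← Finset.add_sum_erase _ _ hstar_mem, hfibstar]
  have hmem : ∀ a : Fin n → Fin n,
      a ∈ (Finset.univ.filter (fun a => FCond n n α a)).erase (srt n (pad n α)) →
      Monotone a ∧ PSc n α (fib n a) ∧ a ≠ srt n (pad n α) := by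
    intro a ha
    rw [Finset.mem_erase, Finset.mem_filter] at ha
    have h2 := (fcond_iff hα _).1 ha.2.2
    exact ⟨h2.1, h2.2, ha.1⟩
  have hzero : ∑ a ∈ (Finset.univ.filter (fun a => FCond n n α a)).erase (srt n (pad n α)),
      DD n (dv n (fib n a)) = 0 := by
    refine Finset.sum_involution
      (fun a _ => if Good n α (srt n (pad n α)) a then prt n α a else a) ?_ ?_ ?_ ?_
    · -- f a + f (g a) = 0
      intro a ha
      obtain ⟨hmono, hPS, hane⟩ := hmem a ha
      by_cases hG : Good n α (srt n (pad n α)) a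
      · simp only [if_pos hG]
        obtain ⟨hmb, hfb, hGb, hprtb⟩ := good_partner hα hmono hPS hane hG
        rw [hfb, dv_swp n (fib n a) hG.1.1 hG.1.2.1,
          DD_swap n _ (Fin.ne_of_val_ne (show (IG n α (fib n a) : ℕ) ≠ IG n α (fib n a) + 1
            by omega))]
        ring
      · simp only [if_neg hG]
        have hz : DD n (dv n (fib n a)) = 0 := by
          by_contra hne
          exact hG (good_of_inj hα hmono hPS hane (DD_inj_of_ne_zero n _ hne))
        rw [hz, add_zero]
    · -- f a ≠ 0 → g a ≠ a
      intro a ha hne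
      obtain ⟨hmono, hPS, hane⟩ := hmem a ha
      have hinj := DD_inj_of_ne_zero n _ hne
      have hG := good_of_inj hα hmono hPS hane hinj
      simp only [if_pos hG]
      intro hpa
      obtain ⟨hmb, hfb, hGb, hprtb⟩ := good_partner hα hmono hPS hane hG
      rw [hpa] at hfb
      have hL1 : IG n α (fib n a) + 1 < n := hG.1.1
      have hL : IG n α (fib n a) < n := by omega
      have hvv := congrFun hfb.symm ⟨IG n α (fib n a), hL⟩
      rw [swp_apply, if_pos rfl] at hvv
      have hd1 : dv n (fib n a) ⟨IG n α (fib n a), hL⟩ =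
          (n - 1 - IG n α (fib n a)) + mex n (fib n a) (IG n α (fib n a)) := by
        unfold dv
        rw [mex_lt _ _ hL]
      have hd2 : dv n (fib n a) ⟨IG n α (fib n a) + 1, hL1⟩ =
          (n - 1 - (IG n α (fib n a) + 1)) + mex n (fib n a) (IG n α (fib n a) + 1) := by
        unfold dv
        rw [mex_lt _ _ hL1]
      have hv3 : fib n a ⟨IG n α (fib n a), hL⟩ = mex n (fib n a) (IG n α (fib n a)) :=
        (mex_lt _ _ hL).symm
      have h12 := hG.1.2.1
      have heqd : dv n (fib n a) ⟨IG n α (fib n a), hL⟩ =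
          dv n (fib n a) ⟨IG n α (fib n a) + 1, hL1⟩ := by
        rw [hd1, hd2]
        omega
      have hcon := hinj heqd
      rw [Fin.mk.injEq] at hcon
      omega
    · -- g a ∈ s
      intro a ha
      by_cases hG : Good n α (srt n (pad n α)) a
      · simp only [if_pos hG]
        obtain ⟨hmono, hPS, hane⟩ := hmem a ha
        obtain ⟨hmb, hfb, hGb, hprtb⟩ := good_partner hα hmono hPS hane hG
        rw [Finset.mem_erase, Finset.mem_filter]
        refine ⟨hG.2.2, Finset.mem_univ _, (fcond_iff hα _).2 ⟨hmb, ?_⟩⟩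
        rw [hfb]
        exact hG.1.2.2
      · simp only [if_neg hG]
        exact ha
    · -- g (g a) = a
      intro a ha
      by_cases hG : Good n α (srt n (pad n α)) a
      · obtain ⟨hmono, hPS, hane⟩ := hmem a ha
        obtain ⟨hmb, hfb, hGb, hprtb⟩ := good_partner hα hmono hPS hane hG
        simp only [if_pos hG, if_pos hGb]
        exact hprtb
      · simp only [if_neg hG]
  rw [hzero, add_zero]

/-! ### The key lemma -/

lemma prod_X_fib (n : ℕ) (a : Fin n → Fin n) :
    (∏ i : Fin n, (X (a i) : MvPolynomial (Fin n) ℚ)) = xgam n (fib n a) := by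
  unfold xgam fib
  rw [← Finset.prod_fiberwise Finset.univ a (fun i => (X (a i) : MvPolynomial (Fin n) ℚ))]
  refine Finset.prod_congr rfl fun t _ => ?_
  have h1 : ∀ i ∈ Finset.univ.filter (fun i => a i = t),
      (X (a i) : MvPolynomial (Fin n) ℚ) = X t := by
    intro i hi
    rw [Finset.mem_filter] at hi
    rw [hi.2]
  rw [Finset.prod_congr rfl h1, Finset.prod_const]

lemma xgam_mul (n : ℕ) (v w : Fin n → ℕ) :
    xgam n v * xgam n w = xgam n (fun t => v t + w t) := by
  unfold xgam
  rw [← Finset.prod_mul_distrib]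
  exact Finset.prod_congr rfl fun t _ => (pow_add _ _ _).symm

lemma keyLemma (n : ℕ) (α : List ℕ) (hα : IsComposition n α) :
    Asym n (xdelta n * Fqs n n α) = DeltaG n (pad n α) := by
  have hexp : xdelta n * Fqs n n α =
      ∑ a : Fin n → Fin n, if FCond n n α a then xgam n (dv n (fib n a)) else 0 := by
    unfold Fqs
    rw [Finset.mul_sum]
    refine Finset.sum_congr rfl fun a _ => ?_
    by_cases h : FCond n n α a
    · rw [if_pos h, if_pos h, prod_X_fib, xdelta_eq_xgam, xgam_mul]
      rfl
    · rw [if_neg h, if_neg h, mul_zero]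
  rw [hexp, Asym_sum]
  have h2 : ∀ a : Fin n → Fin n,
      Asym n (if FCond n n α a then xgam n (dv n (fib n a)) else 0) =
      if FCond n n α a then DD n (dv n (fib n a)) else 0 := by
    intro a
    by_cases h : FCond n n α a
    · rw [if_pos h, if_pos h, Asym_xgam]
    · rw [if_neg h, if_neg h]
      unfold Asym
      simp
  rw [Finset.sum_congr rfl fun a _ => h2 a, ← Finset.sum_filter, coreLemma n α hα,
    DeltaG_eq_DD]
  rfl

/-! ### Final assembly -/

lemma smul_toK (n : ℕ) (q : ℚ) (z : K n) : q • z = toK n (C q) * z := by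
  have h1 : q • z = (q • (1 : MvPolynomial (Fin n) ℚ)) • z := by
    rw [smul_assoc, one_smul]
  rw [h1, smul_eq_C_mul, mul_one, Algebra.smul_def]
  rfl

lemma toK_smul (n : ℕ) (q : ℚ) (p : MvPolynomial (Fin n) ℚ) :
    toK n (q • p) = q • toK n p := by
  rw [smul_toK, smul_eq_C_mul]
  exact map_mul (algebraMap (MvPolynomial (Fin n) ℚ) (K n)) _ _

/-- If every composition-indexed Schur function appearing in the fundamental expansion of P
straightens positively, then P is Schur-positive with the same coefficients. -/
theorem schur_positive_of_positive_straightening (n : ℕ) (P : MvPolynomial (Fin n) ℚ)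
    (hsym : P.IsSymmetric) (hhom : P.IsHomogeneous n)
    (A : Finset (List ℕ)) (a : List ℕ → ℚ) (lam : List ℕ → Fin n → ℕ)
    (hA : ∀ α ∈ A, IsComposition n α)
    (hexp : P = ∑ α ∈ A, a α • Fqs n n α)
    (hnonneg : ∀ α ∈ A, 0 ≤ a α)
    (hstraight : ∀ α ∈ A, a α ≠ 0 → Antitone (lam α) ∧ (∑ j, lam α j) = n ∧
      schurG n (pad n α) = schurG n (lam α)) :
    toK n P = ∑ α ∈ A, a α • schurG n (lam α) := by
  classical
  have hpoly : Vand n * P = ∑ α ∈ A, a α • DeltaG n (pad n α) := by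
    have h1 : Asym n (xdelta n * P) = Vand n * P := by
      rw [Asym_mul_sym n _ P hsym, Asym_xdelta]
    rw [← h1]
    conv_lhs => rw [hexp, Finset.mul_sum]
    rw [Asym_sum]
    refine Finset.sum_congr rfl fun α hαA => ?_
    rw [mul_smul_comm, Asym_smul, keyLemma n α (hA α hαA)]
  have hV : toK n (Vand n) ≠ 0 := by
    have := Vand_ne n
    simpa [toK, map_ne_zero_iff _ (IsFractionRing.injective (MvPolynomial (Fin n) ℚ) (K n))]
      using this
  have hKeq : toK n (Vand n) * toK n P = ∑ α ∈ A, a α • toK n (DeltaG n (pad n α)) := by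
    have := congrArg (toK n) hpoly
    simp only [toK, map_mul, map_sum] at this ⊢
    rw [this]
    exact Finset.sum_congr rfl fun α _ => toK_smul n _ _
  have hP : toK n P = ∑ α ∈ A, a α • schurG n (pad n α) := by
    unfold schurG
    rw [eq_comm]
    have : ∑ α ∈ A, a α • (toK n (DeltaG n (pad n α)) / toK n (Vand n))
        = (∑ α ∈ A, a α • toK n (DeltaG n (pad n α))) / toK n (Vand n) := by
      rw [Finset.sum_div]
      exact Finset.sum_congr rfl fun α _ => (smul_div_assoc _ _ _).symm
    rw [this, ← hKeq, mul_comm, mul_div_assoc, div_self hV, mul_one]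
  rw [hP]
  refine Finset.sum_congr rfl fun α hαA => ?_
  by_cases hza : a α = 0
  · rw [hza, smul_toK, smul_toK]; simp [toK]
  · rw [(hstraight α hαA hza).2.2]
end
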